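/- arXiv:0707.0226 — 6 statements merged into one kernel-verified Lean document; each statement's English description precedes it below -/
import Mathlib

section
/- For a connected graph G with at least one edge, the maximum number of components over all star-factors of G equals the matching number ν(G) of G. -/
open SimpleGraph

/-- A subgraph is a star-factor if it is spanning, has no isolated vertices,
and every edge has an endpoint of degree one (equivalently, every component
is a star `K_{1,n}` with `n ≥ 1`). -/
def SimpleGraph.Subgraph.IsStarFactor {V : Type*} {G : SimpleGraph V}
    (H : G.Subgraph) : Prop :=
  H.IsSpanning ∧ (∀ v : V, ∃ w, H.Adj v w) ∧
    ∀ ⦃u v⦄, H.Adj u v → (∀ w, H.Adj u w → w = v) ∨ (∀ w, H.Adj v w → w = u)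

/-- The number of connected components of a subgraph. -/
noncomputable def SimpleGraph.Subgraph.numComponents {V : Type*} {G : SimpleGraph V}
    (H : G.Subgraph) : ℕ :=
  Nat.card H.coe.ConnectedComponent

/-- The matching number of a graph: the size of a maximum matching. -/
noncomputable def SimpleGraph.matchingNumber {V : Type*} (G : SimpleGraph V) : ℕ :=
  sSup {n | ∃ M : G.Subgraph, M.IsMatching ∧ M.edgeSet.ncard = n}

/-!
Choosing one edge in each star of a star-factor gives a matching, so no star-factor has more
than `ν(G)` components. Conversely, take a maximum matching `M` and join every unmatched vertex
`v` to a neighbour `p v`, which is matched by maximality. If both ends of an edge `xy` of `M`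
received pendant edges `w₁x` and `w₂y` with `w₁ ≠ w₂`, then `w₁xyw₂` would be an augmenting
path. Hence the result is a star-factor, and its components correspond to the edges of `M`.
-/

namespace SimpleGraph

variable {V : Type*} {G : SimpleGraph V}

theorem card_le_card_connectedComponent_of_surjective [Finite V] {β : Type*} {f : V → β}
    (hf : Function.Surjective f) (hadj : ∀ ⦃a b⦄, G.Adj a b → f a = f b) :
    Nat.card β ≤ Nat.card G.ConnectedComponent := by
  have hwalk : ∀ {a b} (p : G.Walk a b), f a = f b := by
    intro a b p
    induction p with
    | nil => rfl
    | cons h _ ih => exact (hadj h).trans ih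
  refine Nat.card_le_card_of_surjective (ConnectedComponent.lift f fun _ _ p _ => hwalk p) ?_
  intro y
  obtain ⟨v, rfl⟩ := hf y
  exact ⟨G.connectedComponentMk v, rfl⟩

theorem exists_isMatching_card_connectedComponent_le [Finite V] (h : ∀ v, ∃ w, G.Adj v w) :
    ∃ M : G.Subgraph, M.IsMatching ∧ Nat.card G.ConnectedComponent ≤ M.edgeSet.ncard := by
  choose w hw using h
  obtain ⟨r, hr⟩ : ∃ r : G.ConnectedComponent → V, ∀ C, G.connectedComponentMk (r C) = C :=
    ⟨fun C => C.out, fun C => C.out_eq⟩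
  have hcomp : ∀ C u, u = r C ∨ u = w (r C) → G.connectedComponentMk u = C := by
    rintro C u (rfl | rfl)
    · exact hr C
    · rw [← ConnectedComponent.connectedComponentMk_eq_of_adj (hw (r C)), hr C]
  let M := ⨆ C, G.subgraphOfAdj (hw (r C))
  have hmatch : M.IsMatching := by
    refine Subgraph.IsMatching.iSup (fun C => .subgraphOfAdj _) fun C D hCD => ?_
    simp only [support_subgraphOfAdj, Set.disjoint_left]
    exact fun u hC hD => hCD ((hcomp C u hC).symm.trans (hcomp D u hD))
  refine ⟨M, hmatch, ?_⟩
  rw [← Nat.card_coe_set_eq]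
  refine Nat.card_le_card_of_injective (fun C => ⟨s(r C, w (r C)), ?_⟩) fun C D hCD => ?_
  · simpa [M] using ⟨C, Or.inl ⟨rfl, rfl⟩⟩
  · have hCD : s(r C, w (r C)) = s(r D, w (r D)) := congrArg Subtype.val hCD
    exact (hr C).symm.trans (hcomp D _ (Sym2.mem_iff.mp (hCD ▸ Sym2.mem_mk_left _ _)))

theorem bddAbove_ncard_edgeSet_isMatching [Finite V] :
    BddAbove {n | ∃ M : G.Subgraph, M.IsMatching ∧ M.edgeSet.ncard = n} := by
  refine ⟨G.edgeSet.ncard, ?_⟩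
  rintro _ ⟨M, -, rfl⟩
  exact Set.ncard_le_ncard M.edgeSet_subset (Set.toFinite _)

namespace Subgraph

variable {M M' : G.Subgraph} {p : V → V} {x y u w w₁ w₂ : V}

theorem IsMatching.ncard_verts [Finite V] (hM : M.IsMatching) :
    M.verts.ncard = 2 * M.edgeSet.ncard := by
  have : Fintype M.edgeSet := Fintype.ofFinite _
  rw [← Nat.card_coe_set_eq, ← Nat.card_coe_set_eq,
    ← Nat.card_congr (Equiv.sigmaFiberEquiv hM.toEdge), Nat.card_sigma, Nat.card_eq_fintype_card,
    mul_comm, ← smul_eq_mul, ← Finset.card_univ, ← Finset.sum_const]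
  refine Finset.sum_congr rfl fun ⟨e, he⟩ _ => ?_
  induction e using Sym2.ind with
  | _ a b =>
    have hab : M.Adj a b := he
    change Nat.card ↥(hM.toEdge ⁻¹' {⟨s(a, b), hab⟩}) = 2
    rw [hM.toEdge_preimage_singleton hab, Nat.card_coe_set_eq, Set.ncard_pair]
    exact fun h => hab.ne (congrArg Subtype.val h)

theorem IsMatching.ncard_edgeSet_lt_of_verts_ssubset [Finite V] (hM : M.IsMatching)
    (hM' : M'.IsMatching) (h : M.verts ⊂ M'.verts) : M.edgeSet.ncard < M'.edgeSet.ncard := by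
  have := Set.ncard_lt_ncard h (Set.toFinite _)
  rw [hM.ncard_verts, hM'.ncard_verts] at this
  omega

theorem IsMatching.deleteVerts_pair (hM : M.IsMatching) (hxy : M.Adj x y) :
    (M.deleteVerts {x, y}).IsMatching := by
  rintro v ⟨hv, hvxy⟩
  obtain ⟨w, hw, huniq⟩ := hM hv
  refine ⟨w, deleteVerts_adj.mpr ⟨hv, hvxy, hw.snd_mem, ?_, hw⟩,
    fun z hz => huniq z (deleteVerts_adj.mp hz).2.2.2.2⟩
  rintro (rfl | rfl)
  · exact hvxy (Or.inr (hM.eq_of_adj_left hxy hw.symm).symm)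
  · exact hvxy (Or.inl (hM.eq_of_adj_right hxy hw).symm)

theorem IsMatching.ncard_edgeSet_le_matchingNumber [Finite V] (hM : M.IsMatching) :
    M.edgeSet.ncard ≤ G.matchingNumber :=
  le_csSup bddAbove_ncard_edgeSet_isMatching ⟨M, hM, rfl⟩

structure IsMaximumMatching_s1 (M : G.Subgraph) : Prop where
  isMatching : M.IsMatching
  ncard_edgeSet_le : ∀ M' : G.Subgraph, M'.IsMatching → M'.edgeSet.ncard ≤ M.edgeSet.ncard

theorem IsMaximumMatching_s1.not_verts_ssubset [Finite V] (hM : M.IsMaximumMatching_s1)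
    (hM' : M'.IsMatching) : ¬M.verts ⊂ M'.verts := fun h =>
  (hM.isMatching.ncard_edgeSet_lt_of_verts_ssubset hM' h).not_ge (hM.ncard_edgeSet_le M' hM')

theorem IsMaximumMatching_s1.mem_verts_of_adj [Finite V] (hM : M.IsMaximumMatching_s1)
    (huw : G.Adj u w) (hu : u ∉ M.verts) : w ∈ M.verts := by
  by_contra hw
  have hmatch : (M ⊔ G.subgraphOfAdj huw).IsMatching := by
    refine hM.isMatching.sup (.subgraphOfAdj huw) ?_
    simp [hM.isMatching.support_eq_verts, Set.disjoint_insert_right, hu, hw]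
  refine hM.not_verts_ssubset hmatch ((Set.ssubset_iff_of_subset Set.subset_union_left).mpr ?_)
  exact ⟨u, by simp, hu⟩

theorem IsMaximumMatching_s1.eq_of_adj_of_adj [Finite V] (hM : M.IsMaximumMatching_s1)
    (hxy : M.Adj x y) (h₁ : G.Adj w₁ x) (h₂ : G.Adj w₂ y) (hw₁ : w₁ ∉ M.verts)
    (hw₂ : w₂ ∉ M.verts) : w₁ = w₂ := by
  by_contra hne
  have hx := hxy.fst_mem
  have hy := hxy.snd_mem
  have hw₁y : w₁ ≠ y := fun h => hw₁ (h ▸ hy)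
  have hw₂x : w₂ ≠ x := fun h => hw₂ (h ▸ hx)
  have hpair : (G.subgraphOfAdj h₁ ⊔ G.subgraphOfAdj h₂).IsMatching := by
    refine (IsMatching.subgraphOfAdj h₁).sup (.subgraphOfAdj h₂) ?_
    simp only [support_subgraphOfAdj, Set.disjoint_insert_right, Set.disjoint_singleton_right,
      Set.mem_insert_iff, Set.mem_singleton_iff]
    grind [hxy.ne]
  -- swap the edge `xy` of `M` for the two edges `w₁x` and `w₂y`
  have hmatch : (M.deleteVerts {x, y} ⊔
      (G.subgraphOfAdj h₁ ⊔ G.subgraphOfAdj h₂)).IsMatching := by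
    refine (hM.isMatching.deleteVerts_pair hxy).sup hpair ?_
    rw [(hM.isMatching.deleteVerts_pair hxy).support_eq_verts, hpair.support_eq_verts]
    simp only [verts_sup, deleteVerts_verts, subgraphOfAdj_verts, Set.disjoint_left]
    grind
  refine hM.not_verts_ssubset hmatch ((Set.ssubset_iff_of_subset ?_).mpr ⟨w₁, by simp, hw₁⟩)
  intro v hv
  simp only [verts_sup, deleteVerts_verts, subgraphOfAdj_verts]
  grind

theorem numComponents_le_matchingNumber [Finite V] {H : G.Subgraph}
    (h : ∀ v ∈ H.verts, ∃ w, H.Adj v w) : H.numComponents ≤ G.matchingNumber := by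
  obtain ⟨M, hM, hcard⟩ := exists_isMatching_card_connectedComponent_le (G := H.coe)
    fun v => have ⟨w, hw⟩ := h v v.2; ⟨⟨w, hw.snd_mem⟩, hw⟩
  calc H.numComponents ≤ M.edgeSet.ncard := hcard
    _ = (Subgraph.coeSubgraph M).edgeSet.ncard := by
      rw [edgeSet_map, Set.ncard_image_of_injective _ (Sym2.map.injective hom_injective)]
    _ ≤ G.matchingNumber := hM.coeSubgraph.ncard_edgeSet_le_matchingNumber

def withPendants (M : G.Subgraph) (p : V → V) (hp : ∀ v ∉ M.verts, G.Adj v (p v)) :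
    G.Subgraph where
  verts := Set.univ
  Adj a b := M.Adj a b ∨ (a ∉ M.verts ∧ p a = b) ∨ (b ∉ M.verts ∧ p b = a)
  adj_sub := by
    rintro a b (h | ⟨ha, rfl⟩ | ⟨hb, rfl⟩)
    exacts [M.adj_sub h, hp a ha, (hp b hb).symm]
  edge_vert _ := Set.mem_univ _
  symm := ⟨fun a b => by
    rintro (h | h | h)
    exacts [Or.inl h.symm, Or.inr (Or.inr h), Or.inr (Or.inl h)]⟩

section withPendants

variable (hp : ∀ v ∉ M.verts, G.Adj v (p v))

theorem withPendants_adj {a b : V} : (M.withPendants p hp).Adj a b ↔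
    M.Adj a b ∨ (a ∉ M.verts ∧ p a = b) ∨ (b ∉ M.verts ∧ p b = a) := Iff.rfl

theorem withPendants_isSpanning : (M.withPendants p hp).IsSpanning := fun _ => Set.mem_univ _

theorem withPendants_adj_of_mem (hu : u ∈ M.verts) (h : (M.withPendants p hp).Adj u w) :
    M.Adj u w ∨ (w ∉ M.verts ∧ p w = u) := by
  rcases (withPendants_adj hp).mp h with h | ⟨hu', -⟩ | h
  exacts [Or.inl h, absurd hu hu', Or.inr h]

theorem withPendants_adj_of_notMem (hpM : ∀ v ∉ M.verts, p v ∈ M.verts) (hu : u ∉ M.verts)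
    (h : (M.withPendants p hp).Adj u w) : w = p u := by
  rcases (withPendants_adj hp).mp h with h | ⟨-, rfl⟩ | ⟨hw, rfl⟩
  exacts [absurd h.fst_mem hu, rfl, absurd (hpM w hw) hu]

theorem IsMaximumMatching_s1.isStarFactor_withPendants [Finite V] (hM : M.IsMaximumMatching_s1) :
    (M.withPendants p hp).IsStarFactor := by
  have hpM : ∀ v ∉ M.verts, p v ∈ M.verts := fun v hv => hM.mem_verts_of_adj (hp v hv) hv
  refine ⟨withPendants_isSpanning hp, fun v => ?_, fun u v huv => ?_⟩
  · by_cases hv : v ∈ M.verts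
    · obtain ⟨w, hw, -⟩ := hM.isMatching hv
      exact ⟨w, Or.inl hw⟩
    · exact ⟨p v, Or.inr (Or.inl ⟨hv, rfl⟩)⟩
  rcases (withPendants_adj hp).mp huv with huv | ⟨hu, rfl⟩ | ⟨hv, rfl⟩
  · by_contra! ⟨⟨w₁, hw₁, hw₁v⟩, ⟨w₂, hw₂, hw₂u⟩⟩
    obtain ⟨hw₁M, rfl⟩ := (withPendants_adj_of_mem hp huv.fst_mem hw₁).resolve_left
      fun h => hw₁v (hM.isMatching.eq_of_adj_left h huv)
    obtain ⟨hw₂M, hpw₂⟩ := (withPendants_adj_of_mem hp huv.snd_mem hw₂).resolve_left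
      fun h => hw₂u (hM.isMatching.eq_of_adj_left h huv.symm)
    obtain rfl := hM.eq_of_adj_of_adj huv (hp w₁ hw₁M) (hpw₂ ▸ hp w₂ hw₂M) hw₁M hw₂M
    exact huv.ne hpw₂
  · exact Or.inl fun w hw => withPendants_adj_of_notMem hp hpM hu hw
  · exact Or.inr fun w hw => withPendants_adj_of_notMem hp hpM hv hw

theorem IsMatching.ncard_edgeSet_le_numComponents_withPendants [Finite V] (hM : M.IsMatching)
    (hpM : ∀ v ∉ M.verts, p v ∈ M.verts) :
    M.edgeSet.ncard ≤ (M.withPendants p hp).numComponents := by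
  classical
  -- the edge of `M` at `q v` is the same for all vertices `v` of a star
  let q : V → M.verts := fun v => if hv : v ∈ M.verts then ⟨v, hv⟩ else ⟨p v, hpM v hv⟩
  have hq : ∀ v (hv : v ∈ M.verts), q v = ⟨v, hv⟩ := fun v hv => dif_pos hv
  rw [← Nat.card_coe_set_eq]
  refine card_le_card_connectedComponent_of_surjective (G := (M.withPendants p hp).coe)
    (f := fun v => hM.toEdge (q v)) (fun e => ?_) ?_
  · obtain ⟨⟨u, hu⟩, rfl⟩ := IsMatching.toEdge.surjective hM e
    exact ⟨⟨u, withPendants_isSpanning hp u⟩, by simp only [hq u hu]⟩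
  · intro a b hab
    rcases (withPendants_adj hp).mp hab with h | ⟨ha, hb⟩ | ⟨hb, ha⟩
    · simp only [hq a h.fst_mem, hq b h.snd_mem]
      exact hM.toEdge_eq_toEdge_of_adj h
    · simp only [q, dif_neg ha, ← hb, dif_pos (hpM a ha)]
    · simp only [q, dif_neg hb, ← ha, dif_pos (hpM b hb)]

end withPendants

end Subgraph

theorem exists_isMaximumMatching [Finite V] :
    ∃ M : G.Subgraph, M.IsMaximumMatching_s1 ∧ M.edgeSet.ncard = G.matchingNumber := by
  have hbot : (⊥ : G.Subgraph).IsMatching := fun v hv => by simp at hv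
  obtain ⟨M, hM, hMν⟩ : G.matchingNumber ∈
      {n | ∃ M : G.Subgraph, M.IsMatching ∧ M.edgeSet.ncard = n} :=
    Nat.sSup_mem ⟨0, ⊥, hbot, by simp⟩ bddAbove_ncard_edgeSet_isMatching
  exact ⟨M, ⟨hM, fun M' hM' => hMν ▸ hM'.ncard_edgeSet_le_matchingNumber⟩, hMν⟩

end SimpleGraph

theorem max_star_factor_components_eq_matchingNumber {V : Type*} [Fintype V]
    (G : SimpleGraph V) (hconn : G.Connected) (hedge : ∃ u v, G.Adj u v) :
    IsGreatest {n | ∃ H : G.Subgraph, H.IsStarFactor ∧ H.numComponents = n}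
      G.matchingNumber := by
  have hnbr : ∀ v, ∃ w, G.Adj v w := by
    obtain ⟨u, v, huv⟩ := hedge
    have : Nontrivial V := nontrivial_of_ne u v huv.ne
    exact hconn.preconnected.exists_adj_of_nontrivial
  choose p hp using hnbr
  have hupper : ∀ H : G.Subgraph, H.IsStarFactor → H.numComponents ≤ G.matchingNumber :=
    fun H hH => Subgraph.numComponents_le_matchingNumber fun v _ => hH.2.1 v
  obtain ⟨M, hM, hMν⟩ := G.exists_isMaximumMatching
  have hpM : ∀ v ∉ M.verts, p v ∈ M.verts := fun v hv => hM.mem_verts_of_adj (hp v) hv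
  have hH : (M.withPendants p fun v _ => hp v).IsStarFactor := hM.isStarFactor_withPendants _
  refine ⟨⟨_, hH, le_antisymm (hupper _ hH) ?_⟩, fun _ ⟨H, hH, hn⟩ => hn ▸ hupper H hH⟩
  exact hMν ▸ hM.isMatching.ncard_edgeSet_le_numComponents_withPendants _ hpM
end

section
/- For a connected graph G with at least one edge, the minimum number of components over all star-factors of G equals the domination number γ(G). -/
open SimpleGraph

/-- The domination number of a graph: the least size of a dominating set. -/
noncomputable def SimpleGraph.dominationNumber {V : Type*} (G : SimpleGraph V) : ℕ :=
  sInf {n | ∃ s : Set V, s.ncard = n ∧ ∀ v, v ∈ s ∨ ∃ u ∈ s, G.Adj u v}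

/-!
Choosing one centre in every star of a star-factor gives a dominating set, so `γ(G)` is at most
the number of components. Conversely, let `D` be a minimum dominating set. As `G` has no isolated
vertices, minimality gives every vertex of `D` a neighbour outside `D`; hence if some `k` vertices
of `D` had fewer than `k` neighbours outside `D`, trading them for those neighbours would give a
smaller dominating set. By Hall's theorem the vertices of `D` thus have distinct neighbours outside
`D`. Sending each matched neighbour to its partner, every other vertex outside `D` to some
neighbour in `D`, and fixing `D`, gives an idempotent map `f` onto `D`; joining every `v` to `f v`
yields a star-factor whose components are the fibres of `f`.
-/

open Finset Function

namespace SimpleGraph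

variable {V : Type*}

def IsDominating (G : SimpleGraph V) (s : Set V) : Prop :=
  ∀ v, v ∈ s ∨ ∃ u ∈ s, G.Adj u v

section Domination

variable {G F : SimpleGraph V} {s : Set V}

theorem dominationNumber_le_ncard (hs : G.IsDominating s) : G.dominationNumber ≤ s.ncard :=
  Nat.sInf_le ⟨s, rfl, hs⟩

theorem dominationNumber_le_card {s : Finset V} (hs : G.IsDominating s) :
    G.dominationNumber ≤ #s :=
  Set.ncard_coe_finset s ▸ dominationNumber_le_ncard hs

theorem exists_isDominating_ncard_eq_dominationNumber (G : SimpleGraph V) :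
    ∃ s : Set V, G.IsDominating s ∧ s.ncard = G.dominationNumber := by
  obtain ⟨s, hcard, hs⟩ :=
    Nat.sInf_mem (s := {n | ∃ s : Set V, s.ncard = n ∧ G.IsDominating s})
      ⟨_, Set.univ, rfl, fun v => Or.inl trivial⟩
  exact ⟨s, hs, hcard⟩

theorem exists_finset_isDominating_card_eq_dominationNumber [Finite V] (G : SimpleGraph V) :
    ∃ D : Finset V, G.IsDominating D ∧ #D = G.dominationNumber := by
  obtain ⟨s, hs, hcard⟩ := G.exists_isDominating_ncard_eq_dominationNumber
  exact ⟨s.toFinite.toFinset, by simpa using hs, by rw [← hcard, Set.ncard_eq_toFinset_card]⟩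

theorem IsDominating.mono_left (hFG : F ≤ G) (hs : F.IsDominating s) : G.IsDominating s :=
  fun v => (hs v).imp_right fun ⟨u, hu, huv⟩ => ⟨u, hu, hFG huv⟩

theorem dominationNumber_anti : Antitone (dominationNumber : SimpleGraph V → ℕ) := by
  intro F G hFG
  obtain ⟨s, hs, hcard⟩ := F.exists_isDominating_ncard_eq_dominationNumber
  exact hcard ▸ dominationNumber_le_ncard (hs.mono_left hFG)

theorem IsDominating.exists_retraction (hs : G.IsDominating s) :
    ∃ r : V → V, ∀ v, r v ∈ s ∧ (v ∈ s → r v = v) ∧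
      (v ∉ s → G.Adj (r v) v) := by
  have : ∀ v, ∃ u, u ∈ s ∧ (v ∈ s → u = v) ∧ (v ∉ s → G.Adj u v) := by
    intro v
    by_cases hv : v ∈ s
    · exact ⟨v, hv, fun _ => rfl, absurd hv⟩
    · obtain ⟨u, hu, huv⟩ := (hs v).resolve_left hv
      exact ⟨u, hu, (absurd · hv), fun _ => huv⟩
  choose r hr using this
  exact ⟨r, hr⟩

end Domination

section StarForest

variable {F : SimpleGraph V}

def IsStarForest (F : SimpleGraph V) : Prop :=
  ∀ ⦃u v⦄, F.Adj u v → (∀ w, F.Adj u w → w = v) ∨ (∀ w, F.Adj v w → w = u)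

def IsStarCenter (F : SimpleGraph V) (c : V) : Prop :=
  ∀ ⦃u⦄, F.Adj c u → ∀ ⦃w⦄, F.Adj u w → w = c

theorem IsStarCenter.eq_or_adj_of_reachable {c v : V} (hc : F.IsStarCenter c)
    (h : F.Reachable c v) : v = c ∨ F.Adj c v := by
  rw [reachable_iff_reflTransGen] at h
  induction h with
  | refl => exact Or.inl rfl
  | tail _ hxy ih =>
    rcases ih with rfl | hcx
    · exact Or.inr hxy
    · exact Or.inl (hc hcx hxy)

theorem IsStarForest.isStarCenter (hF : F.IsStarForest) {c w : V} (hcw : F.Adj c w)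
    (hw : ∀ x, F.Adj w x → x = c) : F.IsStarCenter c := by
  intro u hcu x hux
  rcases hF hcu with hc | hu
  · obtain rfl := hc w hcw
    exact hw x hux
  · exact hu x hux

theorem IsStarForest.exists_isStarCenter_reachable (hF : F.IsStarForest) (v : V) :
    ∃ c, F.IsStarCenter c ∧ F.Reachable v c := by
  by_cases hv : ∃ w, F.Adj v w
  · obtain ⟨w, hvw⟩ := hv
    rcases hF hvw with hvleaf | hwleaf
    · exact ⟨w, hF.isStarCenter hvw.symm hvleaf, hvw.reachable⟩
    · exact ⟨v, hF.isStarCenter hvw hwleaf, .rfl⟩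
  · exact ⟨v, fun u hvu => absurd ⟨u, hvu⟩ hv, .rfl⟩

theorem IsStarForest.dominationNumber_le_card_connectedComponent [Finite V]
    (hF : F.IsStarForest) : F.dominationNumber ≤ Nat.card F.ConnectedComponent := by
  have hcenter : ∀ C : F.ConnectedComponent,
      ∃ c, F.IsStarCenter c ∧ F.connectedComponentMk c = C := by
    refine ConnectedComponent.ind fun v => ?_
    obtain ⟨c, hc, hvc⟩ := hF.exists_isStarCenter_reachable v
    exact ⟨c, hc, (ConnectedComponent.eq.mpr hvc).symm⟩
  choose σ hσ hσC using hcenter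
  have hdom : F.IsDominating (Set.range σ) := by
    intro v
    have hreach : F.Reachable (σ (F.connectedComponentMk v)) v :=
      ConnectedComponent.eq.mp (hσC _)
    rcases (hσ _).eq_or_adj_of_reachable hreach with h | h
    · exact Or.inl ⟨_, h.symm⟩
    · exact Or.inr ⟨_, ⟨_, rfl⟩, h⟩
  calc F.dominationNumber ≤ (Set.range σ).ncard := dominationNumber_le_ncard hdom
    _ = Nat.card (Set.range σ) := (Nat.card_coe_set_eq _).symm
    _ ≤ Nat.card F.ConnectedComponent := Finite.card_range_le σ

end StarForest

section FromFun

def fromFun (f : V → V) : SimpleGraph V :=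
  fromRel fun x y => f x = y

variable {f : V → V}

@[simp]
theorem fromFun_adj {x y : V} : (fromFun f).Adj x y ↔ x ≠ y ∧ (f x = y ∨ f y = x) :=
  fromRel_adj _ x y

theorem fromFun_le {G : SimpleGraph V} (h : ∀ v, f v ≠ v → G.Adj v (f v)) :
    fromFun f ≤ G := by
  rintro x y ⟨hxy, rfl | rfl⟩
  · exact h x hxy.symm
  · exact (h y hxy).symm

theorem reachable_fromFun_apply (v : V) : (fromFun f).Reachable v (f v) := by
  by_cases hv : f v = v
  · rw [hv]
  · exact Adj.reachable (fromFun_adj.mpr ⟨Ne.symm hv, Or.inl rfl⟩)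

theorem exists_fromFun_adj (hfib : ∀ v, ∃ u ≠ f v, f u = f v) (v : V) :
    ∃ w, (fromFun f).Adj v w := by
  by_cases hv : f v = v
  · obtain ⟨u, hu, hfu⟩ := hfib v
    exact ⟨u, fromFun_adj.mpr ⟨(hv ▸ hu).symm, Or.inr (hfu.trans hv)⟩⟩
  · exact ⟨f v, fromFun_adj.mpr ⟨Ne.symm hv, Or.inl rfl⟩⟩

theorem eq_apply_of_fromFun_adj (hf : ∀ v, f (f v) = f v) {u w : V} (hu : f u ≠ u)
    (huw : (fromFun f).Adj u w) : w = f u := by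
  obtain ⟨-, rfl | rfl⟩ := fromFun_adj.mp huw
  · rfl
  · exact absurd (hf w) hu

theorem fromFun_isStarForest (hf : ∀ v, f (f v) = f v) : (fromFun f).IsStarForest := by
  intro u v huv
  obtain ⟨hne, rfl | rfl⟩ := fromFun_adj.mp huv
  · exact Or.inl fun w huw => eq_apply_of_fromFun_adj hf (Ne.symm hne) huw
  · exact Or.inr fun w hvw => eq_apply_of_fromFun_adj hf hne hvw

theorem apply_eq_of_reachable_fromFun (hf : ∀ v, f (f v) = f v) {x y : V}
    (h : (fromFun f).Reachable x y) : f x = f y := by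
  rw [reachable_iff_reflTransGen] at h
  induction h with
  | refl => rfl
  | tail _ hyz ih =>
    obtain ⟨-, rfl | rfl⟩ := fromFun_adj.mp hyz
    · rw [ih, hf]
    · rw [ih, hf]

theorem card_connectedComponent_fromFun (hf : ∀ v, f (f v) = f v) :
    Nat.card (fromFun f).ConnectedComponent = Nat.card (Set.range f) :=
  Nat.card_congr
    { toFun := ConnectedComponent.lift (fun v => ⟨f v, v, rfl⟩) fun _ _ p _ =>
        Subtype.ext (apply_eq_of_reachable_fromFun hf p.reachable)
      invFun := fun c => (fromFun f).connectedComponentMk c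
      left_inv := ConnectedComponent.ind fun v =>
        ConnectedComponent.eq.mpr (reachable_fromFun_apply v).symm
      right_inv := fun ⟨_, v, hv⟩ => Subtype.ext (hv ▸ hf v) }

end FromFun

namespace Subgraph

variable {G F : SimpleGraph V} {H : G.Subgraph}

theorem numComponents_eq_card_connectedComponent_spanningCoe (hH : H.IsSpanning) :
    H.numComponents = Nat.card H.spanningCoe.ConnectedComponent :=
  Nat.card_congr (H.spanningCoeEquivCoeOfSpanning hH).connectedComponentEquiv.symm

theorem IsStarFactor.dominationNumber_le_numComponents [Finite V] (hH : H.IsStarFactor) :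
    G.dominationNumber ≤ H.numComponents := by
  obtain ⟨hspan, -, hstar⟩ := hH
  calc G.dominationNumber
      ≤ H.spanningCoe.dominationNumber := dominationNumber_anti H.spanningCoe_le
    _ ≤ Nat.card H.spanningCoe.ConnectedComponent :=
      IsStarForest.dominationNumber_le_card_connectedComponent hstar
    _ = H.numComponents := (numComponents_eq_card_connectedComponent_spanningCoe hspan).symm

theorem isStarFactor_toSubgraph (hFG : F ≤ G) (hF : F.IsStarForest)
    (hadj : ∀ v, ∃ w, F.Adj v w) : (SimpleGraph.toSubgraph F hFG).IsStarFactor :=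
  ⟨toSubgraph.isSpanning F hFG, hadj, hF⟩

theorem numComponents_toSubgraph (hFG : F ≤ G) :
    (SimpleGraph.toSubgraph F hFG).numComponents = Nat.card F.ConnectedComponent :=
  numComponents_eq_card_connectedComponent_spanningCoe (toSubgraph.isSpanning F hFG)

theorem exists_isStarFactor_numComponents_eq_card_range {f : V → V} (hf : ∀ v, f (f v) = f v)
    (hadj : ∀ v, f v ≠ v → G.Adj v (f v)) (hfib : ∀ v, ∃ u ≠ f v, f u = f v) :
    ∃ H : G.Subgraph, H.IsStarFactor ∧ H.numComponents = Nat.card (Set.range f) :=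
  ⟨_, isStarFactor_toSubgraph (fromFun_le hadj) (fromFun_isStarForest hf)
      (exists_fromFun_adj hfib),
    (numComponents_toSubgraph _).trans (card_connectedComponent_fromFun hf)⟩

end Subgraph

section MinimumDominating

variable [Fintype V] [DecidableEq V] {G : SimpleGraph V} [DecidableRel G.Adj] {D : Finset V}

theorem exists_adj_notMem_of_card_eq_dominationNumber (hG : ∀ v, ∃ w, G.Adj v w)
    (hD : G.IsDominating D) (hcard : #D = G.dominationNumber) {d : V} (hd : d ∈ D) :
    ∃ w, G.Adj d w ∧ w ∉ D := by
  by_contra! hnbr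
  have herase : G.IsDominating (D.erase d) := by
    intro v
    by_cases hvd : v = d
    · obtain ⟨w, hdw⟩ := hG d
      exact Or.inr ⟨w, mem_erase.mpr ⟨hdw.ne.symm, hnbr w hdw⟩, hvd ▸ hdw.symm⟩
    · rcases hD v with hv | ⟨u, hu, huv⟩
      · exact Or.inl (mem_erase.mpr ⟨hvd, hv⟩)
      · by_cases hud : u = d
        · exact Or.inl (mem_erase.mpr ⟨hvd, hnbr v (hud ▸ huv)⟩)
        · exact Or.inr ⟨u, mem_erase.mpr ⟨hud, hu⟩, huv⟩
  exact (card_erase_lt_of_mem hd).not_ge (hcard ▸ dominationNumber_le_card herase)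

theorem card_le_card_adj_notMem_of_card_eq_dominationNumber (hG : ∀ v, ∃ w, G.Adj v w)
    (hD : G.IsDominating D) (hcard : #D = G.dominationNumber) {A : Finset V} (hA : A ⊆ D) :
    #A ≤ #{v | ∃ a ∈ A, G.Adj a v ∧ v ∉ D} := by
  set N : Finset V := {v | ∃ a ∈ A, G.Adj a v ∧ v ∉ D}
  have hdom : G.IsDominating ↑(D \ A ∪ N) := by
    intro v
    by_cases hvA : v ∈ A
    · obtain ⟨w, hvw, hwD⟩ :=
        exists_adj_notMem_of_card_eq_dominationNumber hG hD hcard (hA hvA)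
      exact Or.inr
        ⟨w, mem_union_right _ (mem_filter.mpr ⟨mem_univ w, v, hvA, hvw, hwD⟩), hvw.symm⟩
    by_cases hvD : v ∈ D
    · exact Or.inl (mem_union_left _ (mem_sdiff.mpr ⟨hvD, hvA⟩))
    obtain ⟨u, hu, huv⟩ := (hD v).resolve_left hvD
    by_cases huA : u ∈ A
    · exact Or.inl (mem_union_right _ (mem_filter.mpr ⟨mem_univ v, u, huA, huv, hvD⟩))
    · exact Or.inr ⟨u, mem_union_left _ (mem_sdiff.mpr ⟨hu, huA⟩), huv⟩
  have hle : #D ≤ #D - #A + #N := calc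
    #D ≤ #(D \ A ∪ N) := hcard ▸ dominationNumber_le_card hdom
    _ ≤ #(D \ A) + #N := card_union_le _ _
    _ = #D - #A + #N := by rw [card_sdiff_of_subset hA]
  have := card_le_card hA
  omega

theorem exists_injective_adj_notMem_of_card_eq_dominationNumber (hG : ∀ v, ∃ w, G.Adj v w)
    (hD : G.IsDominating D) (hcard : #D = G.dominationNumber) :
    ∃ m : D → V, Injective m ∧ ∀ d : D, G.Adj d (m d) ∧ m d ∉ D := by
  refine (Fintype.all_card_le_filter_rel_iff_exists_injective
    fun (d : D) v => G.Adj d v ∧ v ∉ D).mp fun A => ?_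
  calc #A = #(A.map (Embedding.subtype _)) := (card_map _).symm
    _ ≤ #{v | ∃ a ∈ A.map (Embedding.subtype _), G.Adj a v ∧ v ∉ D} :=
      card_le_card_adj_notMem_of_card_eq_dominationNumber hG hD hcard
        fun _ => property_of_mem_map_subtype A
    _ = #{v | ∃ a ∈ A, G.Adj a v ∧ v ∉ D} := by simp

theorem exists_idempotent_range_eq_of_card_eq_dominationNumber (hG : ∀ v, ∃ w, G.Adj v w)
    (hD : G.IsDominating D) (hcard : #D = G.dominationNumber) :
    ∃ f : V → V, (∀ v, f (f v) = f v) ∧ (∀ v, f v ≠ v → G.Adj v (f v)) ∧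
      (∀ v, ∃ u ≠ f v, f u = f v) ∧ Set.range f = D := by
  obtain ⟨m, hm, hmD⟩ := exists_injective_adj_notMem_of_card_eq_dominationNumber hG hD hcard
  obtain ⟨r, hr⟩ := hD.exists_retraction
  set f := extend m Subtype.val r
  have hfm : ∀ d, f (m d) = d := hm.extend_apply _ _
  have hfr : ∀ v, (¬∃ d, m d = v) → f v = r v := extend_apply' _ _
  have hfD : ∀ v, f v ∈ D := by
    intro v
    by_cases hv : ∃ d, m d = v
    · obtain ⟨d, rfl⟩ := hv
      exact hfm d ▸ d.2
    · exact hfr v hv ▸ (hr v).1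
  have hfix : ∀ d ∈ D, f d = d := fun d hd => by
    rw [hfr d fun ⟨d', hd'⟩ => (hmD d').2 (hd' ▸ hd), (hr d).2.1 hd]
  refine ⟨f, fun v => hfix _ (hfD v), fun v hv => ?_,
    fun v => ⟨m ⟨f v, hfD v⟩, ?_, hfm _⟩, ?_⟩
  · by_cases hvm : ∃ d, m d = v
    · obtain ⟨d, rfl⟩ := hvm
      exact hfm d ▸ (hmD d).1.symm
    · rw [hfr v hvm] at hv ⊢
      exact ((hr v).2.2 fun hvD => hv ((hr v).2.1 hvD)).symm
  · exact fun h => (hmD _).2 (h ▸ hfD v)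
  · ext v
    exact ⟨by rintro ⟨u, rfl⟩; exact hfD u, fun hv => ⟨v, hfix v hv⟩⟩

end MinimumDominating

end SimpleGraph

theorem min_star_factor_components_eq_dominationNumber {V : Type*} [Fintype V]
    (G : SimpleGraph V) (hconn : G.Connected) (hedge : ∃ u v, G.Adj u v) :
    IsLeast {n | ∃ H : G.Subgraph, H.IsStarFactor ∧ H.numComponents = n}
      G.dominationNumber := by
  classical
  refine ⟨?_, fun n ⟨H, hH, hn⟩ => hn ▸ hH.dominationNumber_le_numComponents⟩
  obtain ⟨u, v, huv⟩ := hedge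
  have : Nontrivial V := huv.nontrivial
  have hG : ∀ v, ∃ w, G.Adj v w := hconn.preconnected.exists_adj_of_nontrivial
  obtain ⟨D, hD, hcard⟩ := G.exists_finset_isDominating_card_eq_dominationNumber
  obtain ⟨f, hf, hadj, hfib, hrange⟩ :=
    exists_idempotent_range_eq_of_card_eq_dominationNumber hG hD hcard
  obtain ⟨H, hH, hcomp⟩ := Subgraph.exists_isStarFactor_numComponents_eq_card_range hf hadj hfib
  refine ⟨H, hH, ?_⟩
  rw [hcomp, hrange, Nat.card_coe_set_eq, Set.ncard_coe_finset, hcard]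
end

section
/- Let G be a connected graph with minimum degree at least 2 that has a perfect matching. If G is star-uniform, then G is isomorphic to the 4-cycle C4. -/
/-!
A perfect matching is an involution `m` along edges of `G`, and as a star factor it has one
component per matched pair. If `x ~ y` with `y ≠ m x` and `m x ~ z` with `z ∉ {x, m y}`,
replacing the pair `x (m x)` by the edges `x y` and `(m x) z` yields a star factor with one
component fewer. So in a star-uniform graph every neighbour of `m x` is `x` or `m y`. Starting
from an edge `u v` with `v ≠ m u` and using minimum degree two, this forces `u, v, m v, m u` to be
a 4-cycle closed under adjacency, hence all of `G` by connectedness.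
-/

open SimpleGraph

/-- A graph is star-uniform if all its star-factors have the same number
of components. -/
def SimpleGraph.IsStarUniform {V : Type*} (G : SimpleGraph V) : Prop :=
  ∀ H₁ H₂ : G.Subgraph, H₁.IsStarFactor → H₂.IsStarFactor →
    H₁.numComponents = H₂.numComponents

namespace SimpleGraph

variable {V : Type*} {G : SimpleGraph V}

lemma card_connectedComponent_eq_card_range {W α : Type*} (K : SimpleGraph W) (f : W → α)
    (hadj : ∀ a b, K.Adj a b → f a = f b) (hreach : ∀ a b, f a = f b → K.Reachable a b) :
    Nat.card K.ConnectedComponent = Nat.card (Set.range f) := by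
  have hconst : ∀ a b, K.Reachable a b → f a = f b := by
    intro a b h
    rw [reachable_iff_reflTransGen] at h
    induction h with
    | refl => rfl
    | tail _ hbc ih => exact ih.trans (hadj _ _ hbc)
  let label : K.ConnectedComponent → Set.range f :=
    ConnectedComponent.lift (fun a => ⟨f a, a, rfl⟩)
      fun a b p _ => Subtype.ext (hconst a b p.reachable)
  have hbij : Function.Bijective label := by
    refine ⟨?_, ?_⟩
    · rintro ⟨a⟩ ⟨b⟩ h
      exact ConnectedComponent.sound (hreach a b (congrArg Subtype.val h))
    · rintro ⟨-, a, rfl⟩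
      exact ⟨K.connectedComponentMk a, rfl⟩
  exact Nat.card_congr (Equiv.ofBijective label hbij)

lemma Subgraph.IsSpanning.numComponents_eq {H : G.Subgraph} (hH : H.IsSpanning) :
    H.numComponents = Nat.card H.spanningCoe.ConnectedComponent :=
  Nat.card_congr (Iso.connectedComponentEquiv (H.spanningCoeEquivCoeOfSpanning hH)).symm

def funSubgraph (φ : V → V) (hφ : ∀ a, G.Adj a (φ a)) : G.Subgraph where
  verts := Set.univ
  Adj a b := b = φ a ∨ a = φ b
  adj_sub := by
    rintro a b (rfl | rfl)
    exacts [hφ a, (hφ b).symm]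
  edge_vert _ := Set.mem_univ _
  symm := ⟨fun _ _ => Or.symm⟩

section funSubgraph

variable {φ : V → V} (hφ : ∀ a, G.Adj a (φ a))

lemma isSpanning_funSubgraph : (funSubgraph φ hφ).IsSpanning := fun _ => Set.mem_univ _

lemma funSubgraph_adj_self (a : V) : (funSubgraph φ hφ).Adj a (φ a) := Or.inl rfl

/-- `hleaf` says that in each edge `a (φ a)` either `a` is a leaf or `φ a` is a leaf
hanging from `a`. -/
lemma isStarFactor_funSubgraph
    (hleaf : ∀ a, (∀ b, φ b = a → b = φ a) ∨ (∀ b, φ b = φ a → b = a) ∧ φ (φ a) = a) :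
    (funSubgraph φ hφ).IsStarFactor := by
  have hedge : ∀ u, (∀ w, (funSubgraph φ hφ).Adj u w → w = φ u) ∨
      ∀ w, (funSubgraph φ hφ).Adj (φ u) w → w = u := by
    intro u
    rcases hleaf u with hu | ⟨hu, hback⟩
    · exact Or.inl fun w hw => hw.elim id (hu w ∘ Eq.symm)
    · exact Or.inr fun w hw => hw.elim (· ▸ hback) (hu w ∘ Eq.symm)
  refine ⟨isSpanning_funSubgraph hφ, fun a => ⟨φ a, funSubgraph_adj_self hφ a⟩, ?_⟩
  rintro u v (rfl | rfl)
  exacts [hedge u, (hedge v).symm]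

lemma numComponents_funSubgraph {α : Type*} (f : V → α) (hf : ∀ a, f (φ a) = f a)
    (hreach : ∀ a b, f a = f b → (funSubgraph φ hφ).spanningCoe.Reachable a b) :
    (funSubgraph φ hφ).numComponents = Nat.card (Set.range f) := by
  rw [(isSpanning_funSubgraph hφ).numComponents_eq]
  refine card_connectedComponent_eq_card_range _ f ?_ hreach
  rintro a b (rfl | rfl)
  exacts [(hf a).symm, hf b]

lemma reachable_funSubgraph_self (a : V) : (funSubgraph φ hφ).spanningCoe.Reachable a (φ a) :=
  Adj.reachable (funSubgraph_adj_self hφ a)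

end funSubgraph

section Matching

variable {m : V → V} (hm : Function.Involutive m) (hmG : ∀ a, G.Adj a (m a))
include hm

lemma isStarFactor_funSubgraph_of_involutive : (funSubgraph m hmG).IsStarFactor :=
  isStarFactor_funSubgraph hmG fun _ => Or.inl fun b hb => hb ▸ (hm b).symm

lemma numComponents_funSubgraph_of_involutive :
    (funSubgraph m hmG).numComponents = Nat.card (Set.range fun a => s(a, m a)) := by
  refine numComponents_funSubgraph hmG _ (fun a => by rw [hm a]; exact Sym2.eq_swap) ?_
  intro a b h
  rcases Sym2.eq_iff.1 h with ⟨rfl, -⟩ | ⟨rfl, -⟩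
  exacts [Reachable.refl _, (reachable_funSubgraph_self hmG b).symm]

end Matching

def reroute [DecidableEq V] (m : V → V) (x p q a : V) : V :=
  if a = x then p else if a = m x then q else m a

section Reroute

variable [DecidableEq V] {m : V → V} (hm : Function.Involutive m) (hmG : ∀ a, G.Adj a (m a))
  {x p q : V} (hp : G.Adj x p) (hq : G.Adj (m x) q)

include hmG hp hq in
lemma adj_reroute (a : V) : G.Adj a (reroute m x p q a) := by
  unfold reroute
  split_ifs with hx hmx
  exacts [hx ▸ hp, hmx ▸ hq, hmG a]

lemma reroute_of_ne {a : V} (hax : a ≠ x) (hamx : a ≠ m x) : reroute m x p q a = m a := by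
  simp [reroute, hax, hamx]

include hm hp hq in
lemma reroute_ne (hpx : p ≠ m x) (hqx : q ≠ x) (b : V) :
    reroute m x p q b ≠ x ∧ reroute m x p q b ≠ m x := by
  unfold reroute
  split_ifs with hbx hbmx
  · exact ⟨hp.ne', hpx⟩
  · exact ⟨hqx, hq.ne'⟩
  · exact ⟨fun h => hbmx (by rw [← h, hm]), fun h => hbx (hm.injective h)⟩

include hm in
lemma eq_of_reroute_eq {b c : V} (hbc : reroute m x p q b = c) (hcp : c ≠ p) (hcq : c ≠ q) :
    b = m c := by
  unfold reroute at hbc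
  split_ifs at hbc
  · exact absurd hbc.symm hcp
  · exact absurd hbc.symm hcq
  · rw [← hbc, hm]

include hm hmG hp hq in
lemma isStarFactor_reroute (hpx : p ≠ m x) (hqx : q ≠ x) (hqp : q ≠ m p) :
    (funSubgraph _ (adj_reroute hmG hp hq)).IsStarFactor := by
  have hmne : ∀ a, m a ≠ a := fun a => (hmG a).ne'
  refine isStarFactor_funSubgraph _ fun a => ?_
  by_cases hax : a = x ∨ a = m x
  · refine Or.inl fun b hb => ?_
    have := reroute_ne hm hp hq hpx hqx b
    rcases hax with rfl | rfl
    exacts [absurd hb this.1, absurd hb this.2]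
  rw [not_or] at hax
  rw [reroute_of_ne hax.1 hax.2]
  by_cases hapq : a ≠ p ∧ a ≠ q
  · exact Or.inl fun b hb => eq_of_reroute_eq hm hb hapq.1 hapq.2
  have hma : m a ≠ p ∧ m a ≠ q := by
    rw [not_and_or, not_ne_iff, not_ne_iff] at hapq
    rcases hapq with rfl | rfl
    · exact ⟨hmne a, Ne.symm hqp⟩
    · exact ⟨fun h => hqp (by rw [← h, hm]), hmne a⟩
  have hmax : m a ≠ x ∧ m a ≠ m x :=
    ⟨fun h => hax.2 (by rw [← h, hm]), fun h => hax.1 (hm.injective h)⟩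
  exact Or.inr ⟨fun b hb => (eq_of_reroute_eq hm hb hma.1 hma.2).trans (hm a),
    by rw [reroute_of_ne hmax.1 hmax.2, hm]⟩

include hm hp hq in
lemma numComponents_reroute_lt [Finite V] (hpx : p ≠ m x) (hqx : q ≠ x) :
    (funSubgraph _ (adj_reroute hmG hp hq)).numComponents < (funSubgraph m hmG).numComponents := by
  have hne := reroute_ne hm hp hq hpx hqx
  have hstep := reachable_funSubgraph_self (adj_reroute hmG hp hq)
  have hrr : ∀ a, reroute m x p q (reroute m x p q a) = m (reroute m x p q a) :=
    fun a => reroute_of_ne (hne a).1 (hne a).2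
  -- label each vertex by the `m`-pair of its image, which is never the pair `{x, m x}`
  rw [numComponents_funSubgraph _ (fun a => s(reroute m x p q a, m (reroute m x p q a))) ?hf ?hr,
    numComponents_funSubgraph_of_involutive hm hmG, Nat.card_coe_set_eq, Nat.card_coe_set_eq]
  case hf =>
    intro a
    rw [hrr, hm]
    exact Sym2.eq_swap
  case hr =>
    intro a b hab
    refine (hstep a).trans (Reachable.trans ?_ (hstep b).symm)
    rcases Sym2.eq_iff.1 hab with ⟨h, -⟩ | ⟨h, -⟩
    · rw [h]
    · rw [h, ← hrr]
      exact (hstep _).symm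
  refine Set.ncard_lt_ncard ((Set.ssubset_iff_of_subset ?_).2 ⟨s(x, m x), ⟨x, rfl⟩, ?_⟩)
  · rintro _ ⟨a, rfl⟩
    exact ⟨_, rfl⟩
  · rintro ⟨a, ha⟩
    rcases Sym2.eq_iff.1 ha with ⟨h, -⟩ | ⟨h, -⟩
    exacts [(hne a).1 h, (hne a).2 h]

end Reroute

lemma Subgraph.IsPerfectMatching.exists_involutive_adj {M : G.Subgraph}
    (hM : M.IsPerfectMatching) : ∃ m : V → V, Function.Involutive m ∧ ∀ a, G.Adj a (m a) := by
  choose m hm huniq using fun a => hM.1 (hM.2 a)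
  exact ⟨m, fun a => (huniq _ _ (hm a).symm).symm, fun a => M.adj_sub (hm a)⟩

theorem IsStarUniform.eq_or_eq_of_adj_partner [Finite V] (hsu : G.IsStarUniform) {m : V → V}
    (hm : Function.Involutive m) (hmG : ∀ a, G.Adj a (m a)) {x y z : V}
    (hxy : G.Adj x y) (hy : y ≠ m x) (hz : G.Adj (m x) z) : z = x ∨ z = m y := by
  classical
  by_contra! h
  exact (numComponents_reroute_lt hm hmG hxy hz hy h.1).ne
    (hsu _ _ (isStarFactor_reroute hm hmG hxy hz hy h.1 h.2)
      (isStarFactor_funSubgraph_of_involutive hm hmG))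

lemma Connected.nonempty_iso_cycleGraph_four (hconn : G.Connected) {a b c d : V}
    (hab : G.Adj a b) (hbc : G.Adj b c) (hcd : G.Adj c d) (hda : G.Adj d a)
    (hac : a ≠ c) (hbd : b ≠ d)
    (ha : ∀ w, G.Adj a w → w = b ∨ w = d) (hb : ∀ w, G.Adj b w → w = a ∨ w = c)
    (hc : ∀ w, G.Adj c w → w = b ∨ w = d) (hd : ∀ w, G.Adj d w → w = a ∨ w = c) :
    Nonempty (G ≃g cycleGraph 4) := by
  have hcover : ∀ w, w = a ∨ w = b ∨ w = c ∨ w = d := by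
    intro w
    have h := (reachable_iff_reflTransGen a w).1 (hconn a w)
    induction h with
    | refl => exact Or.inl rfl
    | tail _ hvw ih =>
      rcases ih with rfl | rfl | rfl | rfl
      · rcases ha _ hvw with rfl | rfl <;> simp
      · rcases hb _ hvw with rfl | rfl <;> simp
      · rcases hc _ hvw with rfl | rfl <;> simp
      · rcases hd _ hvw with rfl | rfl <;> simp
  have hnac : ¬G.Adj a c := fun h => (ha c h).elim hbc.ne' hcd.ne
  have hnbd : ¬G.Adj b d := fun h => (hb d h).elim hda.ne hcd.ne'
  let e : Fin 4 → V := ![a, b, c, d]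
  have he : Function.Bijective e := by
    refine ⟨fun i j hij => ?_, fun w => ?_⟩
    · fin_cases i <;> fin_cases j <;>
        simp_all [e, hab.ne, hbc.ne, hcd.ne, hda.ne, hab.ne', hbc.ne', hcd.ne', hda.ne', hac.symm,
          hbd.symm]
    · rcases hcover w with rfl | rfl | rfl | rfl
      exacts [⟨0, rfl⟩, ⟨1, rfl⟩, ⟨2, rfl⟩, ⟨3, rfl⟩]
  have hnca : ¬G.Adj c a := fun h => hnac h.symm
  have hndb : ¬G.Adj d b := fun h => hnbd h.symm
  refine ⟨(⟨Equiv.ofBijective e he, fun {i j} => ?_⟩ : cycleGraph 4 ≃g G).symm⟩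
  fin_cases i <;> fin_cases j <;>
    simp +decide [e, hab, hbc, hcd, hda, hab.symm, hbc.symm, hcd.symm, hda.symm,
      hnac, hnbd, hnca, hndb]

end SimpleGraph

theorem starUniform_with_perfectMatching_is_C4 {V : Type*} [Fintype V]
    (G : SimpleGraph V) (hconn : G.Connected)
    (hdeg : ∀ v : V, 2 ≤ (G.neighborSet v).ncard)
    (hpm : ∃ M : G.Subgraph, M.IsPerfectMatching)
    (hsu : G.IsStarUniform) :
    Nonempty (G ≃g SimpleGraph.cycleGraph 4) := by
  obtain ⟨M, hM⟩ := hpm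
  obtain ⟨m, hm, hmG⟩ := hM.exists_involutive_adj
  have nbr : ∀ {x y}, G.Adj x y → y ≠ m x → ∀ z, G.Adj (m x) z → z = x ∨ z = m y :=
    fun hxy hy _ hz => hsu.eq_or_eq_of_adj_partner hm hmG hxy hy hz
  have nbr' : ∀ {x y}, G.Adj (m x) (m y) → y ≠ m x → ∀ z, G.Adj x z → z = m x ∨ z = y := by
    intro x y hxy hy z hz
    simpa only [hm y] using nbr hxy (hm.injective.ne hy) z (by rwa [hm x])
  obtain ⟨u⟩ := hconn.nonempty
  obtain ⟨v, huv, hvu⟩ := (G.neighborSet u).exists_ne_of_one_lt_ncard (hdeg u) (m u)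
  obtain ⟨w, huw, hwu⟩ := (G.neighborSet (m u)).exists_ne_of_one_lt_ncard (hdeg (m u)) u
  obtain rfl : w = m v := (nbr huv hvu w huw).resolve_left hwu
  have hum : u ≠ m v := fun h => hvu (by rw [h, hm])
  exact hconn.nonempty_iso_cycleGraph_four huv (hmG v) huw.symm (hmG u).symm hum hvu
    (fun z hz => (nbr' huw hvu z hz).symm) (fun z hz => (nbr' huw.symm hum z hz).symm)
    (nbr huv.symm hum) (nbr huv hvu)
end

section
/- If G is a factor-critical graph, then for every edge xy of G, there exist perfect matchings Mx of G − x and My of G − y such that the symmetric-difference structure Mx ∪ My contains an alternating path of odd order connecting x and y. -/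
/-!
Take a perfect matching `Mx` of `G - x` and `My` of `G - y`, start at `y` (left free by `My`) and
follow `Mx`- and `My`-edges alternately. Every vertex already on the path has both of its partners
on it, except the current end, whose partner in the matching used next is new; so the walk stays a
path, must stop, and can only stop at the one vertex `Mx` leaves free, namely `x`, after an even
number of edges.
-/

open SimpleGraph

/-- A graph is factor-critical if deleting any vertex leaves a graph
with a perfect matching (expressed as a matching of `G` covering all
vertices except `v`). -/
def SimpleGraph.IsFactorCritical {V : Type*} (G : SimpleGraph V) : Prop :=
  ∀ v : V, ∃ M : G.Subgraph, M.IsMatching ∧ M.verts = {v}ᶜ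

namespace SimpleGraph

variable {V : Type*} {G : SimpleGraph V} {x : V}

/-- Alternating walks grown backwards from `x`: the edge prepended next to `q` must come from `M`,
and the vertex `x` is not covered by the matching other than the one of its edge on `q`. -/
inductive IsAltWalk : G.Subgraph → G.Subgraph → {v : V} → G.Walk v x → Prop
  | nil {M N : G.Subgraph} (hx : x ∉ N.verts) : IsAltWalk M N (Walk.nil : G.Walk x x)
  | cons {M N : G.Subgraph} {v w : V} {q : G.Walk w x} (h : G.Adj v w) (hvw : M.Adj v w)
      (hq : IsAltWalk M N q) : IsAltWalk N M (Walk.cons h q)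

namespace IsAltWalk

variable {M N : G.Subgraph} {v : V} {q : G.Walk v x}

theorem mem_edges_of_adj (hM : M.IsMatching) (hN : N.IsMatching) (hq : IsAltWalk M N q) :
    (∀ u ∈ q.support, ∀ z, N.Adj u z → s(u, z) ∈ q.edges) ∧
      ∀ u ∈ q.support, u ≠ v → ∀ z, M.Adj u z → s(u, z) ∈ q.edges := by
  induction hq with
  | nil hx =>
    refine ⟨fun u hu z hz => ?_, fun u hu hne => ?_⟩ <;>
      rw [Walk.support_nil, List.mem_singleton] at hu <;> subst hu
    · exact absurd hz.fst_mem hx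
    · exact absurd rfl hne
  | @cons M N v w q _ hvw _ ih =>
    obtain ⟨ihN, ihM⟩ := ih hN hM
    rw [Walk.support_cons, Walk.edges_cons]
    refine ⟨fun u hu z hz => ?_, fun u hu hne z hz => ?_⟩
    · rcases List.mem_cons.1 hu with rfl | hu
      · rw [hN.eq_of_adj_left hz hvw]
        exact List.mem_cons_self
      · by_cases huw : u = w
        · subst huw
          rw [hN.eq_of_adj_left hz hvw.symm, Sym2.eq_swap]
          exact List.mem_cons_self
        · exact List.mem_cons_of_mem _ (ihM u hu huw z hz)
    · exact List.mem_cons_of_mem _ (ihN u ((List.mem_cons.1 hu).resolve_left hne) z hz)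

theorem notMem_support (hM : M.IsMatching) (hN : N.IsMatching) (hq : IsAltWalk M N q)
    (hp : q.IsPath) {w : V} (hvw : M.Adj v w) : w ∉ q.support := by
  intro hw
  cases hq with
  | nil => exact hvw.adj_sub.ne (List.mem_singleton.1 hw).symm
  | cons _ _ hq =>
    rw [Walk.cons_isPath_iff] at hp
    rcases List.mem_cons.1 hw with rfl | hw
    · exact hvw.adj_sub.ne rfl
    · exact hp.2 (Walk.snd_mem_support_of_mem_edges _
        ((hq.mem_edges_of_adj hN hM).1 w hw v hvw.symm))

theorem exists_cons (hM : M.IsMatching) (hN : N.IsMatching) (hq : IsAltWalk M N q)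
    (hp : q.IsPath) (hv : v ∈ M.verts) :
    ∃ (u : V) (h : G.Adj u v), IsAltWalk N M (Walk.cons h q) ∧ (Walk.cons h q).IsPath := by
  obtain ⟨u, hvu, -⟩ := hM hv
  exact ⟨u, hvu.adj_sub.symm, .cons _ hvu.symm hq,
    hp.cons (hq.notMem_support hM hN hp hvu)⟩

theorem exists_maximal [Fintype V] (hM : M.IsMatching) (hN : N.IsMatching)
    (hNx : {x}ᶜ ⊆ N.verts) {v : V} {q : G.Walk v x} (hq : IsAltWalk M N q) (hp : q.IsPath)
    (heven : Even q.length) :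
    ∃ (u : V) (p : G.Walk u x), IsAltWalk M N p ∧ p.IsPath ∧ Even p.length ∧ u ∉ M.verts := by
  by_cases hv : v ∈ M.verts
  · obtain ⟨w, h, hq₁, hp₁⟩ := hq.exists_cons hM hN hp hv
    have hwx : w ≠ x := fun hwx =>
      ((Walk.cons_isPath_iff _ _).1 hp₁).2 (hwx ▸ q.end_mem_support)
    obtain ⟨u, h', hq₂, hp₂⟩ := hq₁.exists_cons hN hM hp₁ (hNx hwx)
    have hlt := hp₂.length_lt
    exact hq₂.exists_maximal hM hN hNx hp₂
      (by simpa [Walk.length_cons] using heven.add_one.add_one)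
  · exact ⟨v, q, hq, hp, heven, hv⟩
termination_by Fintype.card V - q.length
decreasing_by simp only [Walk.length_cons] at hlt ⊢; omega

theorem mem_edgeSet (hq : IsAltWalk M N q) : ∀ e ∈ q.edges, e ∈ M.edgeSet ∨ e ∈ N.edgeSet := by
  induction hq with
  | nil => simp
  | cons _ hvw _ ih =>
    intro e he
    rcases List.mem_cons.1 he with rfl | he
    · exact .inr hvw
    · exact (ih e he).symm

theorem isChain_cons_edges (hq : IsAltWalk M N q) {e : Sym2 V} (he : e ∈ M.edgeSet) :
    (e :: q.edges).IsChain fun e f =>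
      (e ∈ M.edgeSet ∧ f ∈ N.edgeSet) ∨ (e ∈ N.edgeSet ∧ f ∈ M.edgeSet) := by
  induction hq generalizing e with
  | nil => exact List.isChain_singleton e
  | cons _ hvw _ ih =>
    exact List.isChain_cons_cons.2 ⟨.inl ⟨he, hvw⟩, (ih hvw).imp fun _ _ => Or.symm⟩

theorem isChain_edges (hq : IsAltWalk M N q) :
    q.edges.IsChain fun e f =>
      (e ∈ M.edgeSet ∧ f ∈ N.edgeSet) ∨ (e ∈ N.edgeSet ∧ f ∈ M.edgeSet) := by
  cases hq with
  | nil => exact List.isChain_nil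
  | cons _ hvw hq => exact (hq.isChain_cons_edges hvw).imp fun _ _ => Or.symm

end IsAltWalk

end SimpleGraph

theorem factorCritical_alternating_path_general {V : Type*} [Fintype V]
    (G : SimpleGraph V) (hfc : G.IsFactorCritical)
    {x y : V} :
    ∃ (Mx My : G.Subgraph), Mx.IsMatching ∧ Mx.verts = {x}ᶜ ∧
      My.IsMatching ∧ My.verts = {y}ᶜ ∧
      ∃ p : G.Walk x y, p.IsPath ∧ Odd (p.length + 1) ∧
        (∀ e ∈ p.edges, e ∈ Mx.edgeSet ∨ e ∈ My.edgeSet) ∧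
        List.Chain' (fun e f =>
          (e ∈ Mx.edgeSet ∧ f ∈ My.edgeSet) ∨
          (e ∈ My.edgeSet ∧ f ∈ Mx.edgeSet)) p.edges := by
  obtain ⟨Mx, hMx, hVx⟩ := hfc x
  obtain ⟨My, hMy, hVy⟩ := hfc y
  have hy : y ∉ My.verts := by simp [hVy]
  obtain ⟨u, p, hp, hpath, heven, hu⟩ :=
    (IsAltWalk.nil (M := Mx) hy).exists_maximal hMx hMy hVy.symm.subset .nil (by simp)
  obtain rfl : u = x := by simpa [hVx] using hu
  exact ⟨Mx, My, hMx, hVx, hMy, hVy, p, hpath, heven.add_one, hp.mem_edgeSet, hp.isChain_edges⟩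

theorem factorCritical_alternating_path {V : Type*} [Fintype V]
    (G : SimpleGraph V) (hfc : G.IsFactorCritical)
    {x y : V} (hxy : G.Adj x y) :
    ∃ (Mx My : G.Subgraph), Mx.IsMatching ∧ Mx.verts = {x}ᶜ ∧
      My.IsMatching ∧ My.verts = {y}ᶜ ∧
      ∃ p : G.Walk x y, p.IsPath ∧ Odd (p.length + 1) ∧
        (∀ e ∈ p.edges, e ∈ Mx.edgeSet ∨ e ∈ My.edgeSet) ∧
        List.Chain' (fun e f =>
          (e ∈ Mx.edgeSet ∧ f ∈ My.edgeSet) ∨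
          (e ∈ My.edgeSet ∧ f ∈ Mx.edgeSet)) p.edges :=
  factorCritical_alternating_path_general G hfc
end

section
/- Let G be a connected star-uniform graph with minimum degree at least 2 and no perfect matching, with Gallai–Edmonds decomposition D(G), A(G), C(G). Then A(G) is an independent set in G. -/
open SimpleGraph

/-- A matching is maximum if no matching of `G` has more edges. -/
def SimpleGraph.Subgraph.IsMaximumMatching {V : Type*} {G : SimpleGraph V}
    (M : G.Subgraph) : Prop :=
  M.IsMatching ∧ ∀ M' : G.Subgraph, M'.IsMatching → M'.edgeSet.ncard ≤ M.edgeSet.ncard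

/-- `D(G)`: the vertices missed by at least one maximum matching of `G`. -/
def SimpleGraph.geD {V : Type*} (G : SimpleGraph V) : Set V :=
  {v | ∃ M : G.Subgraph, M.IsMaximumMatching ∧ v ∉ M.verts}

/-- `A(G)`: the vertices outside `D(G)` adjacent to some vertex of `D(G)`. -/
def SimpleGraph.geA {V : Type*} (G : SimpleGraph V) : Set V :=
  {v | v ∉ G.geD ∧ ∃ u ∈ G.geD, G.Adj v u}

/-- `C(G) = V(G) − A(G) − D(G)`. -/
def SimpleGraph.geC {V : Type*} (G : SimpleGraph V) : Set V :=
  (G.geD ∪ G.geA)ᶜ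

/-!
Suppose `u, v ∈ A(G)` are adjacent. Take `d ∈ D(G)` adjacent to `u` and a maximum matching `M`
missing `d`; then `u` and `v` are matched, to `u'` and `v'` say. Hanging every `M`-exposed vertex
on a neighbour turns `M` into a star-factor with `|M|` components: exposed vertices are
independent, and two of them hanging at both ends of an `M`-edge would give an augmenting path.
Now remove `uu'` and `vv'`, add `ud`, hang `u'` and `v` on `u`, and hang every other exposed
vertex on a neighbour other than `v` (minimum degree two). Since `v ∉ D(G)`, no even alternating
path runs from an exposed vertex to `v`, and this excludes every obstruction: the result is a
star-factor with `|M| - 1` components, contradicting star-uniformity.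
-/

namespace SimpleGraph.Subgraph

variable {V : Type*} {G : SimpleGraph V}

section Exchange

variable {M : G.Subgraph} {a b c e x y : V}

lemma IsMatching.deleteVerts_pair_s16 (hM : M.IsMatching) (hab : M.Adj a b) :
    (M.deleteVerts {a, b}).IsMatching := by
  intro c hc
  simp only [deleteVerts_verts, Set.mem_sdiff, Set.mem_insert_iff, Set.mem_singleton_iff,
    not_or] at hc
  obtain ⟨e, hce, he⟩ := hM hc.1
  have hea : e ≠ a := by rintro rfl; exact hc.2.2 (hM.eq_of_adj_right hce hab.symm)
  have heb : e ≠ b := by rintro rfl; exact hc.2.1 (hM.eq_of_adj_right hce hab)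
  refine ⟨e, ?_, fun y hy => he y (deleteVerts_adj.mp hy).2.2.2.2⟩
  simp only [deleteVerts_adj, Set.mem_insert_iff, Set.mem_singleton_iff, not_or]
  exact ⟨hc.1, hc.2, M.edge_vert hce.symm, ⟨hea, heb⟩, hce⟩

lemma IsMatching.edgeSet_deleteVerts_pair (hM : M.IsMatching) (hab : M.Adj a b) :
    (M.deleteVerts {a, b}).edgeSet = M.edgeSet \ {s(a, b)} := by
  ext e
  induction e using Sym2.ind with | _ c e => ?_
  simp only [Subgraph.mem_edgeSet, deleteVerts_adj, Set.mem_sdiff, Set.mem_singleton_iff,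
    Set.mem_insert_iff, Sym2.eq_iff]
  constructor
  · rintro ⟨-, hc, -, -, hce⟩
    exact ⟨hce, by tauto⟩
  · rintro ⟨hce, hne⟩
    refine ⟨M.edge_vert hce, ?_, M.edge_vert hce.symm, ?_, hce⟩
    · rintro (rfl | rfl)
      · exact hne (.inl ⟨rfl, hM.eq_of_adj_left hce hab⟩)
      · exact hne (.inr ⟨rfl, hM.eq_of_adj_left hce hab.symm⟩)
    · rintro (rfl | rfl)
      · exact hne (.inr ⟨hM.eq_of_adj_right hce hab.symm, rfl⟩)
      · exact hne (.inl ⟨hM.eq_of_adj_right hce hab, rfl⟩)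

lemma IsMatching.sup_subgraphOfAdj (hM : M.IsMatching) (hx : x ∉ M.verts) (hy : y ∉ M.verts)
    (hxy : G.Adj x y) : (M ⊔ G.subgraphOfAdj hxy).IsMatching := by
  refine hM.sup (.subgraphOfAdj hxy) ?_
  rw [hM.support_eq_verts, support_subgraphOfAdj, Set.disjoint_right]
  rintro z (rfl | rfl) <;> assumption

def exchange (M : G.Subgraph) (a b : V) {x : V} (hbx : G.Adj b x) : G.Subgraph :=
  M.deleteVerts {a, b} ⊔ G.subgraphOfAdj hbx

variable {hbx : G.Adj b x}

lemma verts_exchange (hab : M.Adj a b) : (M.exchange a b hbx).verts = insert x (M.verts \ {a}) := by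
  ext c
  have := M.edge_vert hab.symm
  have := hab.ne
  simp only [exchange, verts_sup, deleteVerts_verts, subgraphOfAdj_verts, Set.mem_union,
    Set.mem_sdiff, Set.mem_insert_iff, Set.mem_singleton_iff]
  grind

lemma exchange_adj_self : (M.exchange a b hbx).Adj b x :=
  .inr (by simp)

lemma notMem_verts_exchange (hab : M.Adj a b) (hx : x ∉ M.verts) :
    a ∉ (M.exchange a b hbx).verts := by
  rw [verts_exchange hab]
  rintro (rfl | h)
  · exact hx (M.edge_vert hab)
  · exact h.2 rfl

lemma IsMatching.exchange_adj_of_adj (hM : M.IsMatching) (hab : M.Adj a b) (hce : M.Adj c e)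
    (hca : c ≠ a) (hcb : c ≠ b) : (M.exchange a b hbx).Adj c e := by
  have hea : e ≠ a := fun h => hcb (hM.eq_of_adj_right hce (h ▸ hab.symm))
  have heb : e ≠ b := fun h => hca (hM.eq_of_adj_right hce (h ▸ hab))
  left
  simp only [deleteVerts_adj, Set.mem_insert_iff, Set.mem_singleton_iff, not_or]
  exact ⟨M.edge_vert hce, ⟨hca, hcb⟩, M.edge_vert hce.symm, ⟨hea, heb⟩, hce⟩

lemma adj_of_exchange_adj (h : (M.exchange a b hbx).Adj c e) (hc : c ≠ x) (he : e ≠ x) :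
    M.Adj c e := by
  rcases h with h | h
  · exact (deleteVerts_adj.mp h).2.2.2.2
  · simp only [subgraphOfAdj_adj, Sym2.eq_iff] at h
    grind

lemma IsMatching.exchange (hM : M.IsMatching) (hab : M.Adj a b) (hx : x ∉ M.verts) :
    (M.exchange a b hbx).IsMatching := by
  refine (hM.deleteVerts_pair_s16 hab).sup_subgraphOfAdj ?_ ?_ hbx <;> simp_all

lemma IsMatching.edgeSet_exchange (hM : M.IsMatching) (hab : M.Adj a b) :
    (M.exchange a b hbx).edgeSet = insert s(b, x) (M.edgeSet \ {s(a, b)}) := by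
  rw [Subgraph.exchange, edgeSet_sup, hM.edgeSet_deleteVerts_pair hab, edgeSet_subgraphOfAdj,
    Set.union_singleton]

lemma IsMatching.ncard_edgeSet_exchange [Finite V] (hM : M.IsMatching) (hab : M.Adj a b)
    (hx : x ∉ M.verts) : (M.exchange a b hbx).edgeSet.ncard = M.edgeSet.ncard :=
  hM.edgeSet_exchange hab ▸
    Set.ncard_exchange (fun h => hx (M.edge_vert (Subgraph.mem_edgeSet.mp h).symm))
      (Subgraph.mem_edgeSet.mpr hab)

end Exchange

section StarFactor

variable {N : G.Subgraph} {f : V → V} {x y z : V}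

lemma numComponents_eq_of_isSpanning {H : G.Subgraph} (hH : H.IsSpanning) :
    H.numComponents = Nat.card H.spanningCoe.ConnectedComponent :=
  Nat.card_congr (H.spanningCoeEquivCoeOfSpanning hH).connectedComponentEquiv.symm

def extendByPendants (N : G.Subgraph) (f : V → V) (hf : ∀ x ∉ N.verts, G.Adj x (f x)) :
    G.Subgraph where
  verts := Set.univ
  Adj x y := N.Adj x y ∨ (x ∉ N.verts ∧ f x = y) ∨ (y ∉ N.verts ∧ f y = x)
  adj_sub := by
    rintro x y (h | ⟨hx, rfl⟩ | ⟨hy, rfl⟩)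
    · exact N.adj_sub h
    · exact hf x hx
    · exact (hf y hy).symm
  edge_vert _ := Set.mem_univ _
  symm := ⟨by
    rintro x y (h | h | h)
    exacts [.inl h.symm, .inr (.inr h), .inr (.inl h)]⟩

variable {hf : ∀ x ∉ N.verts, G.Adj x (f x)}

lemma extendByPendants_adj_of_notMem (hfN : ∀ x ∉ N.verts, f x ∈ N.verts) (hx : x ∉ N.verts) :
    (N.extendByPendants f hf).Adj x y ↔ y = f x := by
  refine ⟨?_, fun h => .inr (.inl ⟨hx, h.symm⟩)⟩
  rintro (h | ⟨-, rfl⟩ | ⟨hy, rfl⟩)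
  · exact absurd (N.edge_vert h) hx
  · rfl
  · exact absurd (hfN y hy) hx

lemma isStarFactor_extendByPendants (hN : N.IsMatching) (hfN : ∀ x ∉ N.verts, f x ∈ N.verts)
    (hpend : ∀ ⦃a b x y⦄, N.Adj a b → x ∉ N.verts → y ∉ N.verts → f x = a → f y ≠ b) :
    (N.extendByPendants f hf).IsStarFactor := by
  refine ⟨fun _ => Set.mem_univ _, fun x => ?_, ?_⟩
  · by_cases hx : x ∈ N.verts
    · obtain ⟨y, hxy, -⟩ := hN hx
      exact ⟨y, .inl hxy⟩
    · exact ⟨f x, .inr (.inl ⟨hx, rfl⟩)⟩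
  rintro x y (hxy | ⟨hx, rfl⟩ | ⟨hy, rfl⟩)
  · by_cases hy : ∃ z ∉ N.verts, f z = y
    · left
      rintro w (hxw | ⟨hx, -⟩ | ⟨hw, rfl⟩)
      · exact hN.eq_of_adj_left hxw hxy
      · exact absurd (N.edge_vert hxy) hx
      · obtain ⟨z, hz, rfl⟩ := hy
        exact absurd rfl (hpend hxy hw hz rfl)
    · right
      rintro w (hyw | ⟨hy, -⟩ | ⟨hw, rfl⟩)
      · exact hN.eq_of_adj_left hyw hxy.symm
      · exact absurd (N.edge_vert hxy.symm) hy
      · exact absurd ⟨w, hw, rfl⟩ hy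
  · exact .inl fun w => (extendByPendants_adj_of_notMem hfN hx).mp
  · exact .inr fun w => (extendByPendants_adj_of_notMem hfN hy).mp

open Classical in
noncomputable def IsMatching.starEdge (hN : N.IsMatching) (hfN : ∀ x ∉ N.verts, f x ∈ N.verts)
    (x : V) : N.edgeSet :=
  if hx : x ∈ N.verts then hN.toEdge ⟨x, hx⟩ else hN.toEdge ⟨f x, hfN x hx⟩

variable (hN : N.IsMatching) (hfN : ∀ x ∉ N.verts, f x ∈ N.verts)

lemma IsMatching.starEdge_of_mem (hx : x ∈ N.verts) : hN.starEdge hfN x = hN.toEdge ⟨x, hx⟩ :=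
  dif_pos hx

lemma IsMatching.starEdge_of_notMem (hx : x ∉ N.verts) :
    hN.starEdge hfN x = hN.toEdge ⟨f x, hfN x hx⟩ :=
  dif_neg hx

lemma IsMatching.starEdge_eq_of_adj (h : (N.extendByPendants f hf).Adj x y) :
    hN.starEdge hfN x = hN.starEdge hfN y := by
  rcases h with hxy | ⟨hx, rfl⟩ | ⟨hy, rfl⟩
  · rw [hN.starEdge_of_mem hfN (N.edge_vert hxy), hN.starEdge_of_mem hfN (N.edge_vert hxy.symm)]
    exact hN.toEdge_eq_toEdge_of_adj hxy
  · rw [hN.starEdge_of_notMem hfN hx, hN.starEdge_of_mem hfN (hfN x hx)]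
  · rw [hN.starEdge_of_notMem hfN hy, hN.starEdge_of_mem hfN (hfN y hy)]

lemma IsMatching.reachable_of_mem_starEdge (hz : z ∈ (hN.starEdge hfN x : Sym2 V)) :
    (N.extendByPendants f hf).spanningCoe.Reachable x z := by
  obtain ⟨h, hh, hxh, hx⟩ : ∃ h, ∃ hh : h ∈ N.verts,
      (N.extendByPendants f hf).spanningCoe.Reachable x h ∧
        hN.starEdge hfN x = hN.toEdge ⟨h, hh⟩ := by
    by_cases hx : x ∈ N.verts
    · exact ⟨x, hx, .rfl, hN.starEdge_of_mem hfN hx⟩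
    · exact ⟨f x, hfN x hx, Adj.reachable (Or.inr (Or.inl ⟨hx, rfl⟩)), hN.starEdge_of_notMem hfN hx⟩
  obtain ⟨w, hhw, -⟩ := hN hh
  rw [hx, hN.toEdge_eq_of_adj hhw, Sym2.mem_iff] at hz
  rcases hz with rfl | rfl
  · exact hxh
  · exact hxh.trans (Adj.reachable (Or.inl hhw))

lemma IsMatching.reachable_iff_starEdge_eq :
    (N.extendByPendants f hf).spanningCoe.Reachable x y ↔
      hN.starEdge hfN x = hN.starEdge hfN y := by
  refine ⟨?_, fun hxy => ?_⟩
  · rintro ⟨p⟩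
    induction p with
    | nil => rfl
    | cons h _ ih => exact (hN.starEdge_eq_of_adj (hf := hf) hfN h).trans ih
  · have hz := Sym2.out_fst_mem (hN.starEdge hfN x : Sym2 V)
    exact (hN.reachable_of_mem_starEdge hfN hz).trans
      (hN.reachable_of_mem_starEdge hfN (Subtype.ext_iff.mp hxy ▸ hz)).symm

lemma numComponents_extendByPendants (hN : N.IsMatching) (hfN : ∀ x ∉ N.verts, f x ∈ N.verts) :
    (N.extendByPendants f hf).numComponents = N.edgeSet.ncard := by
  rw [numComponents_eq_of_isSpanning fun _ => Set.mem_univ _, ← Nat.card_coe_set_eq]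
  refine Nat.card_eq_of_bijective (ConnectedComponent.lift (hN.starEdge hfN)
    fun x y p _ => (hN.reachable_iff_starEdge_eq hfN).mp p.reachable) ⟨?_, fun e => ?_⟩
  · exact ConnectedComponent.ind₂ fun x y hxy =>
      ConnectedComponent.sound ((hN.reachable_iff_starEdge_eq hfN).mpr hxy)
  · obtain ⟨⟨z, hz⟩, rfl⟩ := IsMatching.toEdge.surjective hN e
    exact ⟨(N.extendByPendants f hf).spanningCoe.connectedComponentMk z, hN.starEdge_of_mem hfN hz⟩

end StarFactor

section MaximumMatching

variable [Finite V] {M : G.Subgraph} {a b c d e u u' v v' x y : V}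

lemma IsMaximumMatching.exchange (hM : M.IsMaximumMatching) (hab : M.Adj a b)
    (hx : x ∉ M.verts) (hbx : G.Adj b x) : (M.exchange a b hbx).IsMaximumMatching :=
  ⟨hM.1.exchange hab hx, fun M' hM' => (hM.1.ncard_edgeSet_exchange hab hx).symm ▸ hM.2 M' hM'⟩

lemma IsMaximumMatching.mem_geD_of_adj (hM : M.IsMaximumMatching) (hab : M.Adj a b)
    (hx : x ∉ M.verts) (hbx : G.Adj b x) : a ∈ G.geD :=
  ⟨_, hM.exchange hab hx hbx, notMem_verts_exchange hab hx⟩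

lemma IsMaximumMatching.not_adj_of_notMem (hM : M.IsMaximumMatching) (hx : x ∉ M.verts)
    (hy : y ∉ M.verts) : ¬G.Adj x y := by
  intro hxy
  have h := hM.2 _ (hM.1.sup_subgraphOfAdj hx hy hxy)
  rw [edgeSet_sup, edgeSet_subgraphOfAdj, Set.union_singleton, Set.ncard_insert_of_notMem
    fun h => hx (M.edge_vert (Subgraph.mem_edgeSet.mp h))] at h
  omega

lemma IsMaximumMatching.eq_of_adj_of_adj (hM : M.IsMaximumMatching) (hx : x ∉ M.verts)
    (hy : y ∉ M.verts) (hxa : G.Adj x a) (hab : M.Adj a b) (hby : G.Adj b y) : x = y := by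
  by_contra hxy
  refine (hM.exchange hab.symm hx hxa.symm).not_adj_of_notMem
    (notMem_verts_exchange hab.symm hx) ?_ hby
  rw [verts_exchange hab.symm]
  rintro (rfl | h)
  · exact hxy rfl
  · exact hy h.1

lemma IsMaximumMatching.mem_geD_of_adj_of_adj (hM : M.IsMaximumMatching) (hx : x ∉ M.verts)
    (hxa : G.Adj x a) (hab : M.Adj a b) (hbc : G.Adj b c) (hce : M.Adj c e) : e ∈ G.geD := by
  by_cases hca : c = a
  · subst hca
    rw [hM.1.eq_of_adj_left hce hab]
    exact hM.mem_geD_of_adj hab.symm hx hxa.symm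
  · exact (hM.exchange hab.symm hx hxa.symm).mem_geD_of_adj
      (hM.1.exchange_adj_of_adj hab.symm hce hbc.ne.symm hca).symm
      (notMem_verts_exchange hab.symm hx) hbc.symm

lemma IsMaximumMatching.exists_isStarFactor (hM : M.IsMaximumMatching)
    (hG : ∀ x, ∃ y, G.Adj x y) :
    ∃ H : G.Subgraph, H.IsStarFactor ∧ H.numComponents = M.edgeSet.ncard := by
  choose g hg using hG
  have hgM : ∀ x ∉ M.verts, g x ∈ M.verts := fun x hx =>
    by_contra fun h => hM.not_adj_of_notMem hx h (hg x)
  refine ⟨M.extendByPendants g fun x _ => hg x, isStarFactor_extendByPendants hM.1 hgM ?_,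
    numComponents_extendByPendants hM.1 hgM⟩
  intro a b x y hab hx hy hxa hyb
  subst hxa hyb
  exact hab.ne (congrArg g (hM.eq_of_adj_of_adj hx hy (hg x) hab (hg y).symm))

lemma IsMaximumMatching.eq_of_adj_of_adj_of_notMem_geD (hM : M.IsMaximumMatching)
    (hvv' : M.Adj v v') (hv : v ∉ G.geD) (hx : x = v' ∨ x ∉ M.verts)
    (hy : y = v' ∨ y ∉ M.verts) (hxa : G.Adj x a) (hab : M.Adj a b) (hby : G.Adj b y) :
    x = y := by
  rcases hx with rfl | hx <;> rcases hy with rfl | hy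
  · rfl
  · exact absurd (hM.mem_geD_of_adj_of_adj hy hby.symm hab.symm hxa.symm hvv'.symm) hv
  · exact absurd (hM.mem_geD_of_adj_of_adj hx hxa hab hby hvv'.symm) hv
  · exact hM.eq_of_adj_of_adj hx hy hxa hab hby

lemma IsMaximumMatching.mem_verts_of_adj_of_notMem_geD (hM : M.IsMaximumMatching)
    (hd : d ∉ M.verts) (hdu : G.Adj d u) (huu' : M.Adj u u') (hvv' : M.Adj v v')
    (hv : v ∉ G.geD) (hx : x = v' ∨ x ∉ M.verts ∧ x ≠ d) (hxc : G.Adj x c) :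
    c ∈ M.verts ∧ c ≠ u' ∧ c ≠ v' := by
  refine ⟨by_contra fun hc => ?_, ?_, ?_⟩ <;> rcases hx with rfl | ⟨hx, hxd⟩
  · exact hv (hM.mem_geD_of_adj hvv' hc hxc)
  · exact hM.not_adj_of_notMem hx hc hxc
  · rintro rfl
    exact hv (hM.mem_geD_of_adj_of_adj hd hdu huu' hxc.symm hvv'.symm)
  · rintro rfl
    exact hxd (hM.eq_of_adj_of_adj hd hx hdu huu' hxc.symm).symm
  · exact hxc.ne.symm
  · rintro rfl
    exact hv (hM.mem_geD_of_adj hvv' hx hxc.symm)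

lemma IsMatching.exists_exchange_deleteVerts (hM : M.IsMatching) (hd : d ∉ M.verts)
    (hud : G.Adj u d) (huu' : M.Adj u u') (hvv' : M.Adj v v') (hvu : v ≠ u) (hvu' : v ≠ u') :
    ∃ N : G.Subgraph, N.IsMatching ∧ N.edgeSet.ncard + 1 = M.edgeSet.ncard ∧
      N.verts = insert d (M.verts \ {u'}) \ {v, v'} ∧ N.Adj u d ∧
      ∀ ⦃a b⦄, N.Adj a b → a ≠ d → b ≠ d → M.Adj a b := by
  have hvv'₁ : (M.exchange u' u hud).Adj v v' :=
    hM.exchange_adj_of_adj huu'.symm hvv' hvu' hvu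
  have hv'u : v' ≠ u := by
    rintro rfl
    exact hvu' (hM.eq_of_adj_left hvv'.symm huu')
  have hdv : d ≠ v := fun h => hd (h ▸ M.edge_vert hvv')
  have hdv' : d ≠ v' := fun h => hd (h ▸ M.edge_vert hvv'.symm)
  refine ⟨(M.exchange u' u hud).deleteVerts {v, v'},
    (hM.exchange huu'.symm hd).deleteVerts_pair_s16 hvv'₁, ?_,
    by rw [deleteVerts_verts, verts_exchange huu'.symm], ?_, fun a b h had hbd => ?_⟩
  · rw [(hM.exchange huu'.symm hd).edgeSet_deleteVerts_pair hvv'₁,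
      Set.ncard_sdiff_singleton_add_one (Subgraph.mem_edgeSet.mpr hvv'₁),
      hM.ncard_edgeSet_exchange huu'.symm hd]
  · simp [verts_exchange huu'.symm, M.edge_vert huu', huu'.ne, hvu.symm, hv'u.symm, hdv, hdv',
      exchange_adj_self]
  · exact adj_of_exchange_adj (deleteVerts_adj.mp h).2.2.2.2 had hbd

lemma IsMaximumMatching.exists_pendant_map (hM : M.IsMaximumMatching) (hd : d ∉ M.verts)
    (hud : G.Adj u d) (huu' : M.Adj u u') (hvv' : M.Adj v v') (huv : G.Adj u v)
    (hv : v ∉ G.geD) (hG : ∀ x, ∃ y, G.Adj x y ∧ y ≠ v) :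
    ∃ f : V → V, ∀ x, x = u' ∨ x = v ∨ x = v' ∨ x ∉ M.verts ∧ x ≠ d →
      G.Adj x (f x) ∧ ((x = u' ∨ x = v) ∧ f x = u ∨
        (f x ∈ M.verts ∧ f x ≠ u' ∧ f x ≠ v ∧ f x ≠ v') ∧ (x = v' ∨ x ∉ M.verts)) := by
  classical
  choose g hg hgv using hG
  refine ⟨fun x => if x = u' ∨ x = v then u else g x, fun x hx => ?_⟩
  beta_reduce
  by_cases hxuv : x = u' ∨ x = v
  · rw [if_pos hxuv]
    refine ⟨?_, .inl ⟨hxuv, rfl⟩⟩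
    rcases hxuv with rfl | rfl
    exacts [(M.adj_sub huu').symm, huv.symm]
  · have hx' : x = v' ∨ x ∉ M.verts ∧ x ≠ d := by tauto
    obtain ⟨hgM, hgu', hgv'⟩ :=
      hM.mem_verts_of_adj_of_notMem_geD hd hud.symm huu' hvv' hv hx' (hg x)
    rw [if_neg hxuv]
    exact ⟨hg x, .inr ⟨⟨hgM, hgu', hgv x, hgv'⟩, hx'.imp_right And.left⟩⟩

lemma IsMaximumMatching.exists_isStarFactor_of_adj_of_notMem_geD (hM : M.IsMaximumMatching)
    (hd : d ∉ M.verts) (hud : G.Adj u d) (huu' : M.Adj u u') (hvv' : M.Adj v v')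
    (huv : G.Adj u v) (hv : v ∉ G.geD) (hG : ∀ x, ∃ y, G.Adj x y ∧ y ≠ v) :
    ∃ H : G.Subgraph, H.IsStarFactor ∧ H.numComponents + 1 = M.edgeSet.ncard := by
  have hvu' : v ≠ u' := by
    rintro rfl
    exact hv (hM.mem_geD_of_adj huu'.symm hd hud)
  have hv'u : v' ≠ u := by
    rintro rfl
    exact hv (hM.mem_geD_of_adj hvv' hd hud)
  obtain ⟨N, hN, hcard, hNverts, hNud, hNM⟩ :=
    hM.1.exists_exchange_deleteVerts hd hud huu' hvv' huv.ne.symm hvu'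
  obtain ⟨f, hf⟩ := hM.exists_pendant_map hd hud huu' hvv' huv hv hG
  replace hf : ∀ x ∉ N.verts, _ := fun x hx => hf x (by
    simp only [hNverts, Set.mem_sdiff, Set.mem_insert_iff, Set.mem_singleton_iff] at hx
    tauto)
  have hfN : ∀ x ∉ N.verts, f x ∈ N.verts ∧ f x ≠ d := by
    have huM := M.edge_vert huu'
    intro x hx
    rw [hNverts]
    rcases (hf x hx).2 with ⟨-, hxu⟩ | ⟨⟨hfM, hfu', hfv, hfv'⟩, -⟩
    · rw [hxu]
      exact ⟨⟨.inr ⟨huM, huu'.ne⟩, by rintro (h | h); exacts [huv.ne h, hv'u h.symm]⟩,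
        fun h => hd (h ▸ huM)⟩
    · exact ⟨⟨.inr ⟨hfM, hfu'⟩, by rintro (h | h); exacts [hfv h, hfv' h]⟩,
        fun h => hd (h ▸ hfM)⟩
  refine ⟨N.extendByPendants f fun x hx => (hf x hx).1,
    isStarFactor_extendByPendants hN (fun x hx => (hfN x hx).1) ?_,
    numComponents_extendByPendants hN (fun x hx => (hfN x hx).1) ▸ hcard⟩
  rintro a b x y hab hx hy rfl rfl
  have hab' := hNM hab (hfN x hx).2 (hfN y hy).2
  rcases (hf x hx).2 with ⟨-, hxu⟩ | ⟨-, hx'⟩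
  · exact (hfN y hy).2 (hN.eq_of_adj_left (hxu ▸ hab) hNud)
  rcases (hf y hy).2 with ⟨-, hyu⟩ | ⟨-, hy'⟩
  · exact (hfN x hx).2 (hN.eq_of_adj_left (hyu ▸ hab.symm) hNud)
  exact hab'.ne (congrArg f
    (hM.eq_of_adj_of_adj_of_notMem_geD hvv' hv hx' hy' (hf x hx).1 hab' (hf y hy).1.symm))

end MaximumMatching

end SimpleGraph.Subgraph

theorem starUniform_no_perfectMatching_geA_independent_general {V : Type*} [Fintype V]
    (G : SimpleGraph V) (hsu : G.IsStarUniform)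
    (hdeg : ∀ v : V, 2 ≤ (G.neighborSet v).ncard) :
    ∀ u ∈ G.geA, ∀ v ∈ G.geA, ¬ G.Adj u v := by
  rintro u ⟨huD, d, ⟨M, hM, hdM⟩, hud⟩ v ⟨hvD, -⟩ huv
  have hG (x : V) : ∃ y, G.Adj x y ∧ y ≠ v := Set.exists_ne_of_one_lt_ncard (hdeg x) v
  obtain ⟨u', huu', -⟩ := hM.1 (by_contra fun h => huD ⟨M, hM, h⟩)
  obtain ⟨v', hvv', -⟩ := hM.1 (by_contra fun h => hvD ⟨M, hM, h⟩)
  obtain ⟨H₁, hH₁, hcard₁⟩ := hM.exists_isStarFactor fun x => (hG x).imp fun _ => And.left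
  obtain ⟨H₂, hH₂, hcard₂⟩ :=
    hM.exists_isStarFactor_of_adj_of_notMem_geD hdM hud huu' hvv' huv hvD hG
  have := hsu H₁ H₂ hH₁ hH₂
  omega

theorem starUniform_no_perfectMatching_geA_independent {V : Type*} [Fintype V]
    (G : SimpleGraph V) (hconn : G.Connected) (hsu : G.IsStarUniform)
    (hdeg : ∀ v : V, 2 ≤ (G.neighborSet v).ncard)
    (hnpm : ¬ ∃ M : G.Subgraph, M.IsPerfectMatching) :
    ∀ u ∈ G.geA, ∀ v ∈ G.geA, ¬ G.Adj u v :=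
  starUniform_no_perfectMatching_geA_independent_general G hsu hdeg
end

section
/- Let G be a connected graph in which every block is isomorphic to K_{2,2} and every block contains a pair of nonadjacent vertices each of degree 2 in G. Then G is star-uniform. -/
open SimpleGraph

/-- A subgraph has no cut vertex if deleting any of its vertices leaves it
preconnected. -/
def SimpleGraph.Subgraph.HasNoCutVertex {V : Type*} {G : SimpleGraph V}
    (H : G.Subgraph) : Prop :=
  ∀ v ∈ H.verts, (H.deleteVerts {v}).coe.Preconnected

/-- A block of `G`: a maximal connected subgraph with no cut vertex. -/
def SimpleGraph.Subgraph.IsBlock {V : Type*} {G : SimpleGraph V}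
    (H : G.Subgraph) : Prop :=
  H.coe.Connected ∧ H.HasNoCutVertex ∧
    ∀ H' : G.Subgraph, H ≤ H' → H'.coe.Connected → H'.HasNoCutVertex → H' = H

/-! ### Auxiliary lemmas -/

instance StarUniformAux.k22DecAdj :
    DecidableRel (completeBipartiteGraph (Fin 2) (Fin 2)).Adj :=
  fun a b => decidable_of_iff ((a.isLeft ∧ b.isRight) ∨ (a.isRight ∧ b.isLeft)) Iff.rfl

set_option maxHeartbeats 4000000 in
lemma StarUniformAux.k22_struct : ∀ U W : Fin 2 ⊕ Fin 2, U ≠ W →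
    ¬ (completeBipartiteGraph (Fin 2) (Fin 2)).Adj U W →
    ∃ X Y : Fin 2 ⊕ Fin 2, X ≠ Y ∧
      (∀ z, z = U ∨ z = W ∨ z = X ∨ z = Y) ∧
      (∀ p q, (completeBipartiteGraph (Fin 2) (Fin 2)).Adj p q ↔
        (((p = U ∨ p = W) ∧ (q = X ∨ q = Y)) ∨ ((p = X ∨ p = Y) ∧ (q = U ∨ q = W)))) := by
  decide

lemma StarUniformAux.blockStruct {V : Type*} [Fintype V] {G : SimpleGraph V} {B : G.Subgraph}
    (e : B.coe ≃g completeBipartiteGraph (Fin 2) (Fin 2))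
    {u v : V} (hu : u ∈ B.verts) (hv : v ∈ B.verts) (huv : u ≠ v)
    (hnadj : ¬ G.Adj u v) (hdu : (G.neighborSet u).ncard = 2)
    (hdv : (G.neighborSet v).ncard = 2) :
    ∃ x y : V, x ≠ y ∧ G.neighborSet u = {x, y} ∧ G.neighborSet v = {x, y} ∧
      B.verts = {u, v, x, y} ∧
      ∀ a b, B.Adj a b ↔ ((a ∈ ({u,v} : Set V) ∧ b ∈ ({x,y} : Set V)) ∨
        (a ∈ ({x,y} : Set V) ∧ b ∈ ({u,v} : Set V))) := by
  set U := e ⟨u, hu⟩ with hU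
  set W := e ⟨v, hv⟩ with hW
  have hUW : U ≠ W := fun h => huv (congrArg Subtype.val (e.toEquiv.injective h))
  have hnadjUW : ¬ (completeBipartiteGraph (Fin 2) (Fin 2)).Adj U W := by
    intro h
    rw [e.map_adj_iff, Subgraph.coe_adj] at h
    exact hnadj (B.adj_sub h)
  obtain ⟨X, Y, hXY, hcover, hchar⟩ := StarUniformAux.k22_struct U W hUW hnadjUW
  set x' := e.symm X with hx'
  set y' := e.symm Y with hy'
  have heX : e x' = X := e.apply_symm_apply X
  have heY : e y' = Y := e.apply_symm_apply Y
  have inj : ∀ {c d : B.verts}, e c = e d → (c : V) = d :=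
    fun h => congrArg Subtype.val (e.toEquiv.injective h)
  have cross : ∀ (c d : ↥B.verts), (((e c = U ∨ e c = W) ∧ (e d = X ∨ e d = Y)) ∨
      ((e c = X ∨ e c = Y) ∧ (e d = U ∨ e d = W))) → B.Adj ↑c ↑d := by
    intro c d h
    have := (hchar (e c) (e d)).mpr h
    rw [e.map_adj_iff, Subgraph.coe_adj] at this
    exact this
  have hxy : (x' : V) ≠ (y' : V) := by
    intro h
    exact hXY (by rw [← heX, ← heY]; exact congrArg e (Subtype.val_injective h))
  have hBux : B.Adj u ↑x' := cross ⟨u, hu⟩ x' (Or.inl ⟨Or.inl rfl, Or.inl heX⟩)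
  have hBuy : B.Adj u ↑y' := cross ⟨u, hu⟩ y' (Or.inl ⟨Or.inl rfl, Or.inr heY⟩)
  have hBvx : B.Adj v ↑x' := cross ⟨v, hv⟩ x' (Or.inl ⟨Or.inr rfl, Or.inl heX⟩)
  have hBvy : B.Adj v ↑y' := cross ⟨v, hv⟩ y' (Or.inl ⟨Or.inr rfl, Or.inr heY⟩)
  have hNu : G.neighborSet u = {↑x', ↑y'} := by
    refine (Set.eq_of_subset_of_ncard_le ?_ ?_ (Set.toFinite _)).symm
    · rintro z hz
      simp only [Set.mem_insert_iff, Set.mem_singleton_iff] at hz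
      rcases hz with rfl | rfl
      · exact B.adj_sub hBux
      · exact B.adj_sub hBuy
    · rw [hdu, Set.ncard_pair hxy]
  have hNv : G.neighborSet v = {↑x', ↑y'} := by
    refine (Set.eq_of_subset_of_ncard_le ?_ ?_ (Set.toFinite _)).symm
    · rintro z hz
      simp only [Set.mem_insert_iff, Set.mem_singleton_iff] at hz
      rcases hz with rfl | rfl
      · exact B.adj_sub hBvx
      · exact B.adj_sub hBvy
    · rw [hdv, Set.ncard_pair hxy]
  refine ⟨↑x', ↑y', hxy, hNu, hNv, ?_, ?_⟩
  · ext w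
    simp only [Set.mem_insert_iff, Set.mem_singleton_iff]
    constructor
    · intro hw
      rcases hcover (e ⟨w, hw⟩) with h | h | h | h
      · exact Or.inl (inj h)
      · exact Or.inr (Or.inl (inj h))
      · exact Or.inr (Or.inr (Or.inl (inj (h.trans heX.symm))))
      · exact Or.inr (Or.inr (Or.inr (inj (h.trans heY.symm))))
    · rintro (rfl | rfl | rfl | rfl)
      · exact hu
      · exact hv
      · exact x'.2
      · exact y'.2
  · intro a b
    simp only [Set.mem_insert_iff, Set.mem_singleton_iff]
    constructor
    · intro hab
      have ha := B.edge_vert hab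
      have hb := B.edge_vert hab.symm
      have : (completeBipartiteGraph (Fin 2) (Fin 2)).Adj (e ⟨a, ha⟩) (e ⟨b, hb⟩) := by
        rw [e.map_adj_iff, Subgraph.coe_adj]; exact hab
      rcases (hchar _ _).mp this with ⟨h1, h2⟩ | ⟨h1, h2⟩
      · refine Or.inl ⟨?_, ?_⟩
        · rcases h1 with h | h
          · exact Or.inl (inj h)
          · exact Or.inr (inj h)
        · rcases h2 with h | h
          · exact Or.inl (inj (h.trans heX.symm))
          · exact Or.inr (inj (h.trans heY.symm))
      · refine Or.inr ⟨?_, ?_⟩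
        · rcases h1 with h | h
          · exact Or.inl (inj (h.trans heX.symm))
          · exact Or.inr (inj (h.trans heY.symm))
        · rcases h2 with h | h
          · exact Or.inl (inj h)
          · exact Or.inr (inj h)
    · rintro (⟨rfl | rfl, rfl | rfl⟩ | ⟨rfl | rfl, rfl | rfl⟩)
      · exact hBux
      · exact hBuy
      · exact hBvx
      · exact hBvy
      · exact hBux.symm
      · exact hBvx.symm
      · exact hBuy.symm
      · exact hBvy.symm

lemma StarUniformAux.subgraph_finite {V : Type*} [Fintype V] (G : SimpleGraph V) :
    Finite G.Subgraph := by
  classical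
  have hinj : Function.Injective
      (fun H : G.Subgraph => (H.verts, fun p : V × V => H.Adj p.1 p.2)) := by
    intro a b h
    simp only [Prod.mk.injEq] at h
    ext x y
    · exact Set.ext_iff.mp h.1 _
    · exact iff_of_eq (congrFun h.2 (x, y))
  exact Finite.of_injective _ hinj

lemma StarUniformAux.exists_block {V : Type*} [Fintype V] {G : SimpleGraph V} {a b : V}
    (hab : G.Adj a b) : ∃ B : G.Subgraph, B.IsBlock ∧ B.Adj a b := by
  classical
  have : Finite G.Subgraph := StarUniformAux.subgraph_finite G
  set P : G.Subgraph → Prop :=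
    fun K => K.coe.Connected ∧ K.HasNoCutVertex with hP
  have hP0 : P (G.subgraphOfAdj hab) := by
    constructor
    · exact (show (G.subgraphOfAdj hab).coe.Connected from
        Subgraph.subgraphOfAdj_connected hab)
    · intro v hv
      have hsub : Set.Subsingleton ((G.subgraphOfAdj hab).deleteVerts {v}).verts := by
        rw [Subgraph.deleteVerts_verts]
        simp only [subgraphOfAdj_verts] at hv ⊢
        intro z hz z' hz'
        simp only [Set.mem_diff, Set.mem_insert_iff, Set.mem_singleton_iff] at hz hz'
        rcases hv with rfl | rfl <;> rcases hz with ⟨rfl | rfl, h1⟩ <;>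
          rcases hz' with ⟨rfl | rfl, h2⟩ <;> simp_all
      have : Subsingleton ↥((G.subgraphOfAdj hab).deleteVerts {v}).verts :=
        hsub.coe_sort
      intro x y
      rw [Subsingleton.elim x y]
  obtain ⟨B, hle, hmax⟩ := Finite.exists_le_maximal hP0
  refine ⟨B, ⟨hmax.prop.1, hmax.prop.2,
    fun H' hle' hc hn => hmax.eq_of_ge ⟨hc, hn⟩ hle'⟩, ?_⟩
  exact hle.2 (by simp)

lemma StarUniformAux.star_deg_one {V : Type*} {G : SimpleGraph V} {H : G.Subgraph}
    (hH : H.IsStarFactor) {u v x y : V} (huv : u ≠ v) (hxy : x ≠ y)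
    (hNu : G.neighborSet u = {x, y}) (hNv : G.neighborSet v = {x, y}) :
    ∃! t, H.Adj u t := by
  obtain ⟨t, ht⟩ := hH.2.1 u
  have hmem : ∀ {w}, H.Adj u w → w = x ∨ w = y := by
    intro w hw
    have : w ∈ G.neighborSet u := H.adj_sub hw
    rw [hNu] at this
    simpa using this
  have hnot : ¬ (H.Adj u x ∧ H.Adj u y) := by
    rintro ⟨hx, hy⟩
    have hX : ∀ w, H.Adj x w → w = u := by
      rcases hH.2.2 hx with h | h
      · exact absurd (h y hy) (Ne.symm hxy)
      · exact h
    have hY : ∀ w, H.Adj y w → w = u := by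
      rcases hH.2.2 hy with h | h
      · exact absurd (h x hx) hxy
      · exact h
    obtain ⟨t', ht'⟩ := hH.2.1 v
    have : t' ∈ G.neighborSet v := H.adj_sub ht'
    rw [hNv] at this
    simp only [Set.mem_insert_iff, Set.mem_singleton_iff] at this
    rcases this with rfl | rfl
    · exact huv (hX v ht'.symm).symm
    · exact huv (hY v ht'.symm).symm
  refine ⟨t, ht, fun t' ht' => ?_⟩
  rcases hmem ht with rfl | rfl <;> rcases hmem ht' with rfl | rfl
  · rfl
  · exact absurd ⟨ht, ht'⟩ hnot
  · exact absurd ⟨ht', ht⟩ hnot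
  · rfl

lemma StarUniformAux.master {V : Type*} [Fintype V] {G : SimpleGraph V} (S : Set V)
    (hS1 : ∀ ⦃a b⦄, G.Adj a b → (a ∈ S ↔ b ∉ S))
    (H : G.Subgraph) (hH : H.IsStarFactor)
    (hS2 : ∀ s ∈ S, ∃! t, H.Adj s t) :
    H.numComponents = Nat.card ↥(Sᶜ) := by
  classical
  have key : ∀ n (a b : ↥H.verts) (p : H.coe.Walk a b), p.length ≤ n →
      ↑a ∉ S → ↑b ∉ S → a = b := by
    intro n
    induction n with
    | zero =>
      intro a b p hp ha hb
      cases p with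
      | nil => rfl
      | cons h q => simp at hp
    | succ n ih =>
      intro a b p hp ha hb
      cases p with
      | nil => rfl
      | cons h q =>
        rename_i c
        have hac : H.Adj ↑a ↑c := by rwa [Subgraph.coe_adj] at h
        have hc : ↑c ∈ S := by
          have := hS1 (H.adj_sub hac); tauto
        cases q with
        | nil => exact absurd hc hb
        | cons h' q' =>
          rename_i d
          have hcd : H.Adj ↑c ↑d := by rwa [Subgraph.coe_adj] at h'
          obtain ⟨t, ht, huniq⟩ := hS2 ↑c hc
          have had : a = d :=
            Subtype.val_injective ((huniq _ hac.symm).trans (huniq _ hcd).symm)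
          have hlen : q'.length ≤ n := by
            simp only [Walk.length_cons] at hp; omega
          exact had.trans (ih d b q' hlen (had ▸ ha) hb)
  let f : ↥(Sᶜ) → H.coe.ConnectedComponent :=
    fun v => H.coe.connectedComponentMk ⟨↑v, hH.1 ↑v⟩
  have hbij : Function.Bijective f := by
    constructor
    · rintro ⟨a, ha⟩ ⟨b, hb⟩ hfab
      have hr : H.coe.Reachable ⟨a, hH.1 a⟩ ⟨b, hH.1 b⟩ :=
        (SimpleGraph.ConnectedComponent.eq).mp hfab
      obtain ⟨p⟩ := hr
      have hab : a = b := congrArg Subtype.val (key p.length _ _ p le_rfl ha hb)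
      exact Subtype.ext hab
    · intro comp
      obtain ⟨w, rfl⟩ := comp.exists_rep
      obtain ⟨t, htw⟩ := hH.2.1 ↑w
      have ht' : t ∈ H.verts := H.edge_vert htw.symm
      by_cases hw : ↑w ∈ S
      · have htS : t ∉ S := (hS1 (H.adj_sub htw)).mp hw
        refine ⟨⟨t, htS⟩, ?_⟩
        apply SimpleGraph.ConnectedComponent.sound
        exact Adj.reachable (by rw [Subgraph.coe_adj]; exact htw.symm)
      · exact ⟨⟨↑w, hw⟩, congrArg _ (Subtype.ext rfl)⟩
  exact (Nat.card_eq_of_bijective f hbij).symm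

set_option maxHeartbeats 1600000 in
theorem blocks_K22_starUniform {V : Type*} [Fintype V]
    (G : SimpleGraph V) (hconn : G.Connected)
    (hblocks : ∀ H : G.Subgraph, H.IsBlock →
      Nonempty (H.coe ≃g completeBipartiteGraph (Fin 2) (Fin 2)) ∧
      ∃ u ∈ H.verts, ∃ v ∈ H.verts, u ≠ v ∧ ¬ G.Adj u v ∧
        (G.neighborSet u).ncard = 2 ∧ (G.neighborSet v).ncard = 2) :
    G.IsStarUniform := by
  classical
  have hpair : ∀ B : G.Subgraph, B.IsBlock → ∃ p : V × V, p.1 ≠ p.2 ∧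
      ∃ x y : V, x ≠ y ∧ G.neighborSet p.1 = {x, y} ∧ G.neighborSet p.2 = {x, y} ∧
      B.verts = {p.1, p.2, x, y} ∧
      (∀ a b, B.Adj a b ↔ ((a ∈ ({p.1, p.2} : Set V) ∧ b ∈ ({x, y} : Set V)) ∨
        (a ∈ ({x, y} : Set V) ∧ b ∈ ({p.1, p.2} : Set V)))) := by
    intro B hB
    obtain ⟨⟨e⟩, u, hu, v, hv, huv, hnadj, hdu, hdv⟩ := hblocks B hB
    obtain ⟨x, y, hxy, hNu, hNv, hverts, hchar⟩ :=
      StarUniformAux.blockStruct e hu hv huv hnadj hdu hdv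
    exact ⟨(u, v), huv, x, y, hxy, hNu, hNv, hverts, hchar⟩
  choose p hp x y hxy hN1 hN2 hverts hchar using hpair
  set S : Set V := {s | ∃ B : G.Subgraph, ∃ hB : B.IsBlock,
    s = (p B hB).1 ∨ s = (p B hB).2} with hSdef
  -- no two special vertices are adjacent
  have hA : ∀ s s', s ∈ S → s' ∈ S → ¬ G.Adj s s' := by
    rintro s s' ⟨B, hB, hs⟩ ⟨B', hB', hs'⟩ hadj
    have hNs : G.neighborSet s = {x B hB, y B hB} := by
      rcases hs with rfl | rfl
      · exact hN1 B hB
      · exact hN2 B hB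
    have hNs' : G.neighborSet s' = {x B' hB', y B' hB'} := by
      rcases hs' with rfl | rfl
      · exact hN1 B' hB'
      · exact hN2 B' hB'
    have hs'mem : s' ∈ ({x B hB, y B hB} : Set V) := by
      rw [← hNs]; exact hadj
    -- (p B).1 and (p B).2 are adjacent to s', hence in nbhd s'
    have hadj1 : G.Adj s' (p B hB).1 := by
      have : B.Adj (p B hB).1 s' := (hchar B hB _ _).mpr (Or.inl ⟨by simp, hs'mem⟩)
      exact (B.adj_sub this).symm
    have hadj2 : G.Adj s' (p B hB).2 := by
      have : B.Adj (p B hB).2 s' := (hchar B hB _ _).mpr (Or.inl ⟨by simp, hs'mem⟩)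
      exact (B.adj_sub this).symm
    have hsubuv : ({(p B hB).1, (p B hB).2} : Set V) ⊆ {x B' hB', y B' hB'} := by
      rintro z hz
      simp only [Set.mem_insert_iff, Set.mem_singleton_iff] at hz
      rcases hz with rfl | rfl
      · rw [← hNs']; exact hadj1
      · rw [← hNs']; exact hadj2
    have huvxy' : ({(p B hB).1, (p B hB).2} : Set V) = {x B' hB', y B' hB'} :=
      Set.eq_of_subset_of_ncard_le hsubuv
        (by rw [Set.ncard_pair (hxy B' hB'), Set.ncard_pair (hp B hB)]) (Set.toFinite _)
    -- partner of s' in the pair of B'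
    obtain ⟨w', hw'ne, hset⟩ : ∃ w', s' ≠ w' ∧
        ({(p B' hB').1, (p B' hB').2} : Set V) = {s', w'} := by
      rcases hs' with rfl | rfl
      · exact ⟨(p B' hB').2, hp B' hB', rfl⟩
      · exact ⟨(p B' hB').1, (hp B' hB').symm, Set.pair_comm _ _⟩
    have hw'mem : w' ∈ ({(p B' hB').1, (p B' hB').2} : Set V) := by
      rw [hset]; simp
    have hNw' : G.neighborSet w' = {x B' hB', y B' hB'} := by
      simp only [Set.mem_insert_iff, Set.mem_singleton_iff] at hw'mem
      rcases hw'mem with rfl | rfl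
      · exact hN1 B' hB'
      · exact hN2 B' hB'
    have hadjw' : G.Adj w' (p B hB).1 := by
      have : (p B hB).1 ∈ G.neighborSet w' := by
        rw [hNw', ← huvxy']; simp
      exact this
    have hw'xy : w' ∈ ({x B hB, y B hB} : Set V) := by
      rw [← hN1 B hB]; exact hadjw'.symm
    have hsub2 : ({s', w'} : Set V) ⊆ {x B hB, y B hB} := by
      rintro z hz
      simp only [Set.mem_insert_iff, Set.mem_singleton_iff] at hz
      rcases hz with rfl | rfl
      · exact hs'mem
      · exact hw'xy
    have heq2 : ({s', w'} : Set V) = {x B hB, y B hB} :=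
      Set.eq_of_subset_of_ncard_le hsub2
        (by rw [Set.ncard_pair (hxy B hB), Set.ncard_pair hw'ne]) (Set.toFinite _)
    have hpairs' : ({(p B' hB').1, (p B' hB').2} : Set V) = {x B hB, y B hB} :=
      hset.trans heq2
    -- B' = B
    have hBeq : B' = B := by
      apply Subgraph.ext
      · rw [hverts B' hB', hverts B hB]
        have e1 := Set.ext_iff.mp hpairs'
        have e2 := Set.ext_iff.mp huvxy'
        ext z
        have h1 := e1 z
        have h2 := e2 z
        simp only [Set.mem_insert_iff, Set.mem_singleton_iff] at h1 h2 ⊢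
        tauto
      · funext a b
        apply propext
        rw [hchar B' hB' a b, hchar B hB a b, hpairs', ← huvxy']
        tauto
    subst hBeq
    have hBB' : hB' = hB := proof_irrel hB' hB
    rw [hBB'] at hs'
    rcases hs' with rfl | rfl
    · exact G.irrefl hadj1
    · exact G.irrefl hadj2
  have hS1 : ∀ ⦃a b⦄, G.Adj a b → (a ∈ S ↔ b ∉ S) := by
    intro a b hab
    constructor
    · intro ha hb
      exact hA a b ha hb hab
    · intro hb
      obtain ⟨B, hB, hBab⟩ := StarUniformAux.exists_block hab
      rcases (hchar B hB a b).mp hBab with ⟨h1, h2⟩ | ⟨h1, h2⟩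
      · refine ⟨B, hB, ?_⟩
        simpa using h1
      · exact absurd ⟨B, hB, by simpa using h2⟩ hb
  have hS2 : ∀ (H : G.Subgraph), H.IsStarFactor → ∀ s ∈ S, ∃! t, H.Adj s t := by
    rintro H hH s ⟨B, hB, hs⟩
    rcases hs with rfl | rfl
    · exact StarUniformAux.star_deg_one hH (hp B hB) (hxy B hB) (hN1 B hB) (hN2 B hB)
    · exact StarUniformAux.star_deg_one hH (hp B hB).symm (hxy B hB) (hN2 B hB) (hN1 B hB)
  intro H₁ H₂ h₁ h₂
  rw [StarUniformAux.master S hS1 H₁ h₁ (hS2 H₁ h₁),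
    StarUniformAux.master S hS1 H₂ h₂ (hS2 H₂ h₂)]
end
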